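/- arXiv:2102.04384 — 8 statements merged into one kernel-verified Lean document; each statement's English description precedes it below -/
import Mathlib

section
/- For every instance I of the rationing problem and every baseline ordering ≻_π, every matching output by the Reverse Rejecting (RR) rule respects priorities: there are no agents i, j and category c such that the output matches i to c, leaves j unmatched, and j ≻_c i. -/
open scoped Classical

/-- An instance of the rationing problem: a quota for every category and, for every
category `c`, a priority ranking `≿_c`: a total preorder on `N ∪ {∅}`, where we model
`N ∪ {∅}` as `Option N` with `none` playing the role of `∅`. -/
structure Inst (N C : Type*) where
  quota : C → ℕ
  prio : C → Option N → Option N → Prop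
  total : ∀ c x y, prio c x y ∨ prio c y x
  trans : ∀ c x y z, prio c x y → prio c y z → prio c x z

namespace Inst

variable {N C : Type*}

/-- The strict part `≻_c` of the priority ranking `≿_c`. -/
def Strict (I : Inst N C) (c : C) (x y : Option N) : Prop :=
  I.prio c x y ∧ ¬ I.prio c y x

/-- Agent `i` is eligible for category `c` if `i ≻_c ∅`. -/
def Eligible (I : Inst N C) (i : N) (c : C) : Prop :=
  I.Strict c (some i) none

end Inst

variable {N C : Type*} [Fintype N] [DecidableEq N] [DecidableEq C]

/-- The number of matched agents of (the function) `μ`. -/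
def msize (μ : N → Option C) : ℕ :=
  (Finset.univ.filter fun i => μ i ≠ none).card

/-- `μ` satisfies the capacity constraints: every category `c` is matched
to at most `quota c` agents. -/
def Inst.IsMatching (I : Inst N C) (μ : N → Option C) : Prop :=
  ∀ c, (Finset.univ.filter fun i => μ i = some c).card ≤ I.quota c

/-- A baseline ordering `≻_π`, given as a duplicate-free list of all agents,
listed from highest priority to lowest priority; so `i ≻_π j` iff
`order.indexOf i < order.indexOf j`. -/
def IsBaseline (order : List N) : Prop :=
  order.Nodup ∧ ∀ i : N, i ∈ order

/-- `μ` is a matching of the reduced reservation graph `B_I^{-R}`: it satisfies the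
capacity constraints, leaves all agents of `R` unmatched, and uses only edges `{i,c}`
with `i` eligible for `c` and no `j ∈ R` with `j ≻_c i`. -/
def Inst.MatchingOf (I : Inst N C) (R : Finset N) (μ : N → Option C) : Prop :=
  I.IsMatching μ ∧ (∀ i ∈ R, μ i = none) ∧
    ∀ i c, μ i = some c → I.Eligible i c ∧ ∀ j ∈ R, ¬ I.Strict c (some j) (some i)

/-- `ms(B_I^{-R})`: the size of a maximum size matching of the reduced reservation
graph `B_I^{-R}`. -/
noncomputable def Inst.ms (I : Inst N C) (R : Finset N) : ℕ :=
  sSup {k | ∃ μ : N → Option C, I.MatchingOf R μ ∧ msize μ = k}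

/-- The set `R_I` of agents rejected by the Reverse Rejecting (RR) rule: the agents are
considered in order of the baseline ordering from lowest to highest priority (i.e. from the
end of the list `order` to its front), and agent `i` is added to the current rejected set `R`
iff `ms(B_I^{-(R ∪ {i})}) = ms(B_I)`. -/
noncomputable def Inst.rrReject (I : Inst N C) (order : List N) : Finset N :=
  order.foldr
    (fun i R => if I.ms (insert i R) = I.ms (∅ : Finset N) then insert i R else R) ∅

/-- `μ` is a possible output of the RR rule for baseline ordering `order`:
a maximum size matching of the reduced reservation graph `B_I^{-R_I}`. -/
def Inst.IsRROutcome (I : Inst N C) (order : List N) (μ : N → Option C) : Prop :=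
  I.MatchingOf (I.rrReject order) μ ∧ msize μ = I.ms (I.rrReject order)

/-! Adding any agent outside the final rejected set `R` to `R` lowers `ms`, so a maximum
matching `μ` of `B_I^{-R}` cannot leave an agent `j ∉ R` unmatched: `μ` is then no matching of
`B_I^{-(R ∪ {j})}`, so some `l` is matched to a category `c` with `j ≻_c l`, and handing `l`'s
seat to `j` gives another maximum matching which leaves `l ∉ R` unmatched. This strictly
raises the sum over matched agents of their rank in their category, so the process cannot go
on forever. Hence in an RR outcome an unmatched agent lies in `R`, and then no agent it
outranks at `c` may be matched to `c`. -/

open Finset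

theorem Inst.Strict.trans {α β : Type*} {I : Inst α β} {c : β} {x y z : Option α}
    (hxy : I.Strict c x y) (hyz : I.Strict c y z) : I.Strict c x z :=
  ⟨I.trans c x y z hxy.1 hyz.1, fun hzx => hxy.2 (I.trans c y z x hyz.1 hzx)⟩

theorem Inst.Strict.ne {α β : Type*} {I : Inst α β} {c : β} {x y : Option α}
    (h : I.Strict c x y) : x ≠ y := by
  rintro rfl
  exact h.2 h.1

theorem Finset.sum_lt_sum_of_eq_off_pair {ι M : Type*} [Fintype ι] [DecidableEq ι]
    [AddCommMonoid M] [PartialOrder M] [IsOrderedCancelAddMonoid M] {f g : ι → M} {j l : ι}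
    (hjl : j ≠ l) (heq : ∀ i, i ≠ j → i ≠ l → f i = g i) (hlt : f j + f l < g j + g l) :
    ∑ i, f i < ∑ i, g i := by
  have hpair : ({j, l} : Finset ι) ⊆ univ := subset_univ _
  rw [← sum_sdiff hpair, ← sum_sdiff (f := g) hpair, sum_pair hjl, sum_pair hjl,
    sum_congr rfl fun i hi => heq i (by simp_all) (by simp_all)]
  exact add_lt_add_right hlt _

theorem Finset.card_filter_comp_perm {ι : Type*} [Fintype ι] (p : ι → Prop) [DecidablePred p]
    (σ : Equiv.Perm ι) : #{i | p (σ i)} = #{i | p i} := by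
  simp only [card_filter]
  exact Equiv.sum_comp σ fun i => if p i then 1 else 0

omit [DecidableEq N] [DecidableEq C] in
theorem msize_comp_perm (μ : N → Option C) (σ : Equiv.Perm N) : msize (μ ∘ σ) = msize μ :=
  card_filter_comp_perm (fun i => μ i ≠ none) σ

namespace Inst

variable {I : Inst N C} {R : Finset N} {μ : N → Option C}

section

omit [DecidableEq N]

theorem IsMatching.comp_perm (hμ : I.IsMatching μ) (σ : Equiv.Perm N) :
    I.IsMatching (μ ∘ σ) := fun c =>
  (card_filter_comp_perm (fun i => μ i = some c) σ).trans_le (hμ c)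

theorem MatchingOf.anti {R' : Finset N} (hμ : I.MatchingOf R' μ) (hR : R ⊆ R') :
    I.MatchingOf R μ :=
  ⟨hμ.1, fun i hi => hμ.2.1 i (hR hi), fun i c hic =>
    ⟨(hμ.2.2 i c hic).1, fun j hj => (hμ.2.2 i c hic).2 j (hR hj)⟩⟩

theorem MatchingOf.notMem_of_ne_none (hμ : I.MatchingOf R μ) {i : N} (hi : μ i ≠ none) :
    i ∉ R :=
  fun hiR => hi (hμ.2.1 i hiR)

theorem matchingOf_none (I : Inst N C) (R : Finset N) : I.MatchingOf R fun _ => none :=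
  ⟨fun c => by simp, fun _ _ => rfl, fun _ _ h => nomatch h⟩

theorem bddAbove_matchingSizes (I : Inst N C) (R : Finset N) :
    BddAbove {k | ∃ μ : N → Option C, I.MatchingOf R μ ∧ msize μ = k} :=
  ⟨Fintype.card N, fun _ ⟨_, _, hk⟩ => hk ▸ card_le_univ _⟩

theorem MatchingOf.msize_le_ms (hμ : I.MatchingOf R μ) : msize μ ≤ I.ms R :=
  le_csSup (bddAbove_matchingSizes I R) ⟨μ, hμ, rfl⟩

theorem ms_antitone (I : Inst N C) : Antitone I.ms := fun R R' hR =>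
  csSup_le_csSup (bddAbove_matchingSizes I R)
    ⟨0, fun _ => none, matchingOf_none I R', by simp [msize]⟩
    fun _ ⟨μ, hμ, hk⟩ => ⟨μ, hμ.anti hR, hk⟩

end

theorem MatchingOf.insert_of_not_strict (hμ : I.MatchingOf R μ) {j : N} (hj : μ j = none)
    (hdom : ∀ l c, μ l = some c → ¬ I.Strict c (some j) (some l)) :
    I.MatchingOf (insert j R) μ := by
  refine ⟨hμ.1, ?_, fun i c hic => ⟨(hμ.2.2 i c hic).1, ?_⟩⟩
  · simpa only [Finset.forall_mem_insert] using ⟨hj, hμ.2.1⟩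
  · simpa only [Finset.forall_mem_insert] using ⟨hdom i c hic, (hμ.2.2 i c hic).2⟩

section

omit [DecidableEq N] [DecidableEq C]

noncomputable def rank (I : Inst N C) (c : C) (i : N) : ℕ :=
  #{x | I.prio c (some i) (some x)}

theorem rank_lt_rank {c : C} {j l : N} (hs : I.Strict c (some j) (some l)) :
    I.rank c l < I.rank c j := by
  refine card_lt_card ((ssubset_iff_of_subset fun x hx => ?_).2 ⟨j, ?_, ?_⟩)
  · simp only [mem_filter, mem_univ, true_and] at hx ⊢
    exact I.trans c _ _ _ hs.1 hx
  · simpa using (I.total c (some j) (some j)).elim id id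
  · simpa using hs.2

noncomputable def potential (I : Inst N C) (μ : N → Option C) : ℕ :=
  ∑ i, (μ i).elim 0 fun c => I.rank c i

theorem potential_le (I : Inst N C) (μ : N → Option C) :
    I.potential μ ≤ Fintype.card N * Fintype.card N := by
  calc I.potential μ ≤ ∑ _i : N, Fintype.card N := by
        refine sum_le_sum fun i _ => ?_
        cases μ i with
        | none => exact Nat.zero_le _
        | some c => exact card_le_univ _
    _ = Fintype.card N * Fintype.card N := by simp

end

section Swap

variable {j l : N} {c : C}

theorem MatchingOf.comp_swap (hμ : I.MatchingOf R μ) (hjR : j ∉ R) (hj : μ j = none)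
    (hl : μ l = some c) (hs : I.Strict c (some j) (some l)) :
    I.MatchingOf R (μ ∘ Equiv.swap j l) := by
  have hlR : l ∉ R := hμ.notMem_of_ne_none (by simp [hl])
  obtain ⟨hcap, hRnone, hedge⟩ := hμ
  refine ⟨hcap.comp_perm _, fun i hi => ?_, fun i c' hic' => ?_⟩
  · rw [Function.comp_apply, Equiv.swap_apply_of_ne_of_ne (ne_of_mem_of_not_mem hi hjR)
      (ne_of_mem_of_not_mem hi hlR)]
    exact hRnone i hi
  by_cases hij : i = j
  · subst hij
    obtain rfl : c = c' := by simpa [hl] using hic'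
    obtain ⟨hl_elig, hl_undominated⟩ := hedge l c hl
    exact ⟨hs.trans hl_elig, fun r hr hrj => hl_undominated r hr (hrj.trans hs)⟩
  by_cases hil : i = l
  · subst hil
    simp [hj] at hic'
  · rw [Function.comp_apply, Equiv.swap_apply_of_ne_of_ne hij hil] at hic'
    exact hedge i c' hic'

omit [DecidableEq C] in
theorem potential_lt_potential_comp_swap (hj : μ j = none) (hl : μ l = some c)
    (hs : I.Strict c (some j) (some l)) :
    I.potential μ < I.potential (μ ∘ Equiv.swap j l) := by
  refine sum_lt_sum_of_eq_off_pair (fun h => hs.ne (congrArg some h)) (fun i hij hil => ?_) ?_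
  · simp [Equiv.swap_apply_of_ne_of_ne hij hil]
  · simpa [hj, hl] using rank_lt_rank hs

end Swap

theorem exists_strict_of_ms_insert_lt (hμ : I.MatchingOf R μ) (hmax : msize μ = I.ms R)
    {j : N} (hj : μ j = none) (hlt : I.ms (insert j R) < I.ms R) :
    ∃ l c, μ l = some c ∧ I.Strict c (some j) (some l) := by
  by_contra! hdom
  have := (hμ.insert_of_not_strict hj hdom).msize_le_ms
  omega

theorem MatchingOf.ne_none_of_ms_insert_lt {μ : N → Option C}
    (hR : ∀ k ∉ R, I.ms (insert k R) < I.ms R) (hμ : I.MatchingOf R μ)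
    (hmax : msize μ = I.ms R) {j : N} (hjR : j ∉ R) :
    μ j ≠ none := by
  intro hj
  obtain ⟨l, c, hl, hs⟩ := exists_strict_of_ms_insert_lt hμ hmax hj (hR j hjR)
  have hμ' := hμ.comp_swap hjR hj hl hs
  -- `hgain` and `hbound` discharge the termination goal.
  have hgain := potential_lt_potential_comp_swap hj hl hs
  have hbound := I.potential_le (μ ∘ Equiv.swap j l)
  have hlR : l ∉ R := hμ.notMem_of_ne_none (by simp [hl])
  exact ne_none_of_ms_insert_lt hR hμ' ((msize_comp_perm μ _).trans hmax) hlR (by simp [hj])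
termination_by Fintype.card N * Fintype.card N - I.potential μ

theorem rrReject_cons (I : Inst N C) (i : N) (order : List N) :
    I.rrReject (i :: order) = if I.ms (insert i (I.rrReject order)) = I.ms ∅
      then insert i (I.rrReject order) else I.rrReject order := rfl

theorem ms_rrReject (I : Inst N C) (order : List N) : I.ms (I.rrReject order) = I.ms ∅ := by
  induction order with
  | nil => rfl
  | cons i order ih =>
    rw [rrReject_cons]
    split_ifs with h
    exacts [h, ih]

theorem ms_insert_rrReject_lt (I : Inst N C) {order : List N} {j : N} (hj : j ∈ order)
    (hjR : j ∉ I.rrReject order) : I.ms (insert j (I.rrReject order)) < I.ms ∅ := by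
  induction order with
  | nil => simp at hj
  | cons i order ih =>
    rw [rrReject_cons] at hjR ⊢
    split_ifs at hjR ⊢ with h
    · have hjt : j ∈ order := (List.mem_cons.1 hj).resolve_left (by grind)
      calc I.ms (insert j (insert i (I.rrReject order)))
          ≤ I.ms (insert j (I.rrReject order)) := I.ms_antitone (by grind)
        _ < I.ms ∅ := ih hjt (by grind)
    · by_cases hji : j = i
      · subst hji
        exact (I.ms_antitone (empty_subset _)).lt_of_ne h
      · exact ih ((List.mem_cons.1 hj).resolve_left hji) hjR

end Inst

/-- Every matching output by the RR rule respects priorities: there are no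
agents `i, j` and category `c` with `μ i = c`, `μ j = ∅`, and `j ≻_c i`. -/
theorem rr_respects_priorities (I : Inst N C) (order : List N)
    (hb : IsBaseline order) (μ : N → Option C) (hμ : I.IsRROutcome order μ) :
    ¬ ∃ (i j : N) (c : C), μ i = some c ∧ μ j = none ∧ I.Strict c (some j) (some i) := by
  rintro ⟨i, j, c, hi, hj, hs⟩
  obtain ⟨hμR, hmax⟩ := hμ
  by_cases hjR : j ∈ I.rrReject order
  · exact (hμR.2.2 i c hi).2 j hjR hs
  · have hR : ∀ k ∉ I.rrReject order,
        I.ms (insert k (I.rrReject order)) < I.ms (I.rrReject order) := fun k hk =>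
      I.ms_rrReject order ▸ I.ms_insert_rrReject_lt (hb.2 k) hk
    exact hμR.ne_none_of_ms_insert_lt hR hmax hjR hj
end

section
/- For every instance I of the rationing problem and every baseline ordering ≻_π, every matching output by the Reverse Rejecting (RR) rule is a maximum size matching: its number of matched agents equals the largest size of any matching that complies with the eligibility requirements, i.e., equals ms(B_I). -/
open scoped Classical

variable {N C : Type*} [Fintype N] [DecidableEq N] [DecidableEq C]

/-- Every matching output by the RR rule is a maximum size matching: its number
of matched agents equals `ms(B_I)`, the largest size of any matching complying with the
eligibility requirements. -/
theorem rr_maximum_size (I : Inst N C) (order : List N)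
    (hb : IsBaseline order) (μ : N → Option C) (hμ : I.IsRROutcome order μ) :
    msize μ = I.ms (∅ : Finset N) := by
  rw [hμ.2]
  suffices h : ∀ (l : List N) (R : Finset N), I.ms R = I.ms (∅ : Finset N) →
      I.ms (l.foldr
        (fun i R => if I.ms (insert i R) = I.ms (∅ : Finset N) then insert i R else R) R)
        = I.ms (∅ : Finset N) by
    exact h order ∅ rfl
  intro l
  induction l with
  | nil => intro R hR; exact hR
  | cons a l ih =>
    intro R hR
    simp only [List.foldr_cons]
    set R' := l.foldr
      (fun i R => if I.ms (insert i R) = I.ms (∅ : Finset N) then insert i R else R) R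
    by_cases hc : I.ms (insert a R') = I.ms (∅ : Finset N)
    · simpa [hc] using hc
    · simpa [hc] using ih R hR
end

section
/- For every instance I of the rationing problem and every baseline ordering ≻_π, let R_I be the final set of agents rejected by the Reverse Rejecting (RR) rule. Then ms(B_I^{-R_I}) = |N \ R_I|; consequently, every matching output by the RR rule matches exactly the agents in N \ R_I, i.e., an agent is unmatched by the RR rule if and only if she belongs to R_I. -/
open scoped Classical

variable {N C : Type*} [Fintype N] [DecidableEq N] [DecidableEq C]

set_option linter.unusedSectionVars false

section Aux

variable (I : Inst N C)

lemma prio_refl (c : C) (x : Option N) : I.prio c x x := (I.total c x x).elim id id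

lemma strict_trans {c : C} {x y z : Option N} (h1 : I.Strict c x y) (h2 : I.Strict c y z) :
    I.Strict c x z :=
  ⟨I.trans c _ _ _ h1.1 h2.1, fun h => h2.2 (I.trans c _ _ _ h h1.1)⟩

lemma strict_irrefl (c : C) (x : Option N) : ¬ I.Strict c x x := fun h => h.2 h.1

lemma matchingOf_anti {R R' : Finset N} (h : R ⊆ R') {μ : N → Option C}
    (hμ : I.MatchingOf R' μ) : I.MatchingOf R μ :=
  ⟨hμ.1, fun i hi => hμ.2.1 i (h hi),
    fun i c hc => ⟨(hμ.2.2 i c hc).1, fun j hj => (hμ.2.2 i c hc).2 j (h hj)⟩⟩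

lemma matchingOf_none (R : Finset N) : I.MatchingOf R (fun _ => none) := by
  refine ⟨fun c => ?_, fun i _ => rfl, fun i c hc => by simp at hc⟩
  simp

lemma msize_le_card (μ : N → Option C) : msize μ ≤ Fintype.card N := by
  classical
  exact le_trans (Finset.card_filter_le _ _) (le_of_eq (Finset.card_univ))

lemma msSet_nonempty (R : Finset N) :
    {k | ∃ μ : N → Option C, I.MatchingOf R μ ∧ msize μ = k}.Nonempty :=
  ⟨msize (fun _ => (none : Option C)), fun _ => none, matchingOf_none I R, rfl⟩

lemma msSet_bdd (R : Finset N) :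
    BddAbove {k | ∃ μ : N → Option C, I.MatchingOf R μ ∧ msize μ = k} :=
  ⟨Fintype.card N, fun k hk => by obtain ⟨μ, -, rfl⟩ := hk; exact msize_le_card μ⟩

lemma exists_max_matching (R : Finset N) :
    ∃ μ : N → Option C, I.MatchingOf R μ ∧ msize μ = I.ms R :=
  Nat.sSup_mem (msSet_nonempty I R) (msSet_bdd I R)

lemma msize_le_ms {R : Finset N} {μ : N → Option C} (hμ : I.MatchingOf R μ) :
    msize μ ≤ I.ms R :=
  le_csSup (msSet_bdd I R) ⟨μ, hμ, rfl⟩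

lemma ms_anti {R R' : Finset N} (h : R ⊆ R') : I.ms R' ≤ I.ms R := by
  refine csSup_le_csSup (msSet_bdd I R) (msSet_nonempty I R') ?_
  rintro k ⟨μ, hμ, rfl⟩
  exact ⟨μ, matchingOf_anti I h hμ, rfl⟩

end Aux

section Key

variable (I : Inst N C)

/-- Potential of a matching: total number of dominating pairs over matched agents. -/
noncomputable def pot (μ : N → Option C) : ℕ :=
  ∑ a : N, (match μ a with
    | none => 0
    | some c => (Finset.univ.filter fun x => I.Strict c (some x) (some a)).card)

/-- Key combinatorial lemma: if rejecting any further agent strictly decreases the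
maximum matching size, then the maximum matching covers all non-rejected agents. -/
lemma ms_eq_card_of_drop (R : Finset N)
    (hdrop : ∀ i ∉ R, I.ms (insert i R) < I.ms R) :
    I.ms R = (Finset.univ \ R).card := by
  classical
  have hub : I.ms R ≤ (Finset.univ \ R).card := by
    obtain ⟨μ, hμ, hms⟩ := exists_max_matching I R
    rw [← hms]
    refine Finset.card_le_card ?_
    intro a ha
    rw [Finset.mem_filter] at ha
    exact Finset.mem_sdiff.2 ⟨Finset.mem_univ a, fun haR => ha.2 (hμ.2.1 a haR)⟩
  -- choose a maximum matching with minimal potential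
  have hSne : {k | ∃ μ : N → Option C,
      I.MatchingOf R μ ∧ msize μ = I.ms R ∧ pot I μ = k}.Nonempty := by
    obtain ⟨μ, hμ, hms⟩ := exists_max_matching I R
    exact ⟨pot I μ, μ, hμ, hms, rfl⟩
  obtain ⟨μ, hμ, hms, hpot⟩ := Nat.sInf_mem hSne
  set M : Finset N := Finset.univ.filter (fun a => μ a ≠ none) with hMdef
  have hMcard : M.card = msize μ := rfl
  have hMsub : M ⊆ Finset.univ \ R := by
    intro a ha
    rw [hMdef, Finset.mem_filter] at ha
    exact Finset.mem_sdiff.2 ⟨Finset.mem_univ a, fun haR => ha.2 (hμ.2.1 a haR)⟩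
  refine le_antisymm hub ?_
  by_contra hlt
  push_neg at hlt
  -- find an unmatched non-rejected agent i
  have hex : ∃ i ∈ Finset.univ \ R, i ∉ M := by
    by_contra h
    push_neg at h
    have := Finset.card_le_card h
    omega
  obtain ⟨i, hiR', hiM⟩ := hex
  have hiR : i ∉ R := (Finset.mem_sdiff.1 hiR').2
  have hi0 : μ i = none := by
    by_contra h
    exact hiM (Finset.mem_filter.2 ⟨Finset.mem_univ i, h⟩)
  by_cases hbad : ∃ j c, μ j = some c ∧ I.Strict c (some i) (some j)
  · -- swap i in for j: contradicts minimality of the potential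
    obtain ⟨j, c, hjc, hij⟩ := hbad
    have hij_ne : i ≠ j := fun h => by rw [h, hjc] at hi0; exact nomatch hi0
    have hedge := hμ.2.2 j c hjc
    set μ' : N → Option C := fun a => if a = i then some c else if a = j then none else μ a
      with hμ'def
    have hμ'i : μ' i = some c := by simp [hμ'def]
    have hμ'j : μ' j = none := by simp [hμ'def, Ne.symm hij_ne]
    have hμ'other : ∀ a, a ≠ i → a ≠ j → μ' a = μ a := by
      intro a h1 h2; simp [hμ'def, h1, h2]
    -- μ' is a matching of B^{-R}
    have hμ' : I.MatchingOf R μ' := by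
      refine ⟨?_, ?_, ?_⟩
      · intro d
        by_cases hd : d = c
        · subst hd
          have hset : (Finset.univ.filter fun a => μ' a = some d)
              = insert i ((Finset.univ.filter fun a => μ a = some d).erase j) := by
            ext a
            by_cases h1 : a = i
            · subst h1; simp [hμ'i]
            · by_cases h2 : a = j
              · subst h2; simp [hμ'j, h1]
              · simp [hμ'other a h1 h2, h1, h2]
          rw [hset]
          have hjmem : j ∈ (Finset.univ.filter fun a => μ a = some d) :=
            Finset.mem_filter.2 ⟨Finset.mem_univ j, hjc⟩
          have himem : i ∉ (Finset.univ.filter fun a => μ a = some d).erase j := by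
            intro h
            have := (Finset.mem_filter.1 (Finset.mem_of_mem_erase h)).2
            rw [hi0] at this; exact nomatch this
          rw [Finset.card_insert_of_notMem himem, Finset.card_erase_of_mem hjmem]
          have hpos : 0 < (Finset.univ.filter fun a => μ a = some d).card :=
            Finset.card_pos.2 ⟨j, hjmem⟩
          have := hμ.1 d
          omega
        · have hset : (Finset.univ.filter fun a => μ' a = some d)
              = (Finset.univ.filter fun a => μ a = some d) := by
            ext a
            by_cases h1 : a = i
            · subst h1; simp [hμ'i, hi0, hd, Ne.symm hd]
            · by_cases h2 : a = j
              · subst h2; simp [hμ'j, hjc, hd, Ne.symm hd]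
              · simp [hμ'other a h1 h2]
          rw [hset]; exact hμ.1 d
      · intro a haR
        by_cases h1 : a = i
        · exact absurd haR (h1 ▸ hiR)
        · by_cases h2 : a = j
          · rw [h2]; exact hμ'j
          · rw [hμ'other a h1 h2]; exact hμ.2.1 a haR
      · intro a d had
        by_cases h1 : a = i
        · subst h1
          rw [hμ'i] at had
          have hdc : c = d := Option.some_injective C had
          subst hdc
          refine ⟨strict_trans I hij hedge.1, ?_⟩
          intro r hr hri
          exact hedge.2 r hr (strict_trans I hri hij)
        · by_cases h2 : a = j
          · rw [h2, hμ'j] at had; exact nomatch had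
          · rw [hμ'other a h1 h2] at had; exact hμ.2.2 a d had
    -- μ' has the same size
    have hsize' : msize μ' = msize μ := by
      have hset : (Finset.univ.filter fun a => μ' a ≠ none)
          = insert i ((Finset.univ.filter fun a => μ a ≠ none).erase j) := by
        ext a
        by_cases h1 : a = i
        · subst h1; simp [hμ'i]
        · by_cases h2 : a = j
          · subst h2; simp [hμ'j, h1]
          · simp [hμ'other a h1 h2, h1, h2]
      have hjmem : j ∈ (Finset.univ.filter fun a => μ a ≠ none) :=
        Finset.mem_filter.2 ⟨Finset.mem_univ j, by rw [hjc]; exact fun h => nomatch h⟩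
      have himem : i ∉ (Finset.univ.filter fun a => μ a ≠ none).erase j := by
        intro h
        exact (Finset.mem_filter.1 (Finset.mem_of_mem_erase h)).2 hi0
      have hpos : 0 < (Finset.univ.filter fun a => μ a ≠ none).card :=
        Finset.card_pos.2 ⟨j, hjmem⟩
      show (Finset.univ.filter fun a => μ' a ≠ none).card = _
      rw [hset, Finset.card_insert_of_notMem himem, Finset.card_erase_of_mem hjmem]
      unfold msize
      omega
    -- μ' has strictly smaller potential
    have hpotlt : pot I μ' < pot I μ := by
      have hterm : ∀ (ν : N → Option C) (a : N), ν a = none →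
          (match ν a with
            | none => 0
            | some c => (Finset.univ.filter fun x => I.Strict c (some x) (some a)).card) = 0 := by
        intro ν a h; rw [h]
      have hterm2 : ∀ (ν : N → Option C) (a : N) (d : C), ν a = some d →
          (match ν a with
            | none => 0
            | some c => (Finset.univ.filter fun x => I.Strict c (some x) (some a)).card)
            = (Finset.univ.filter fun x => I.Strict d (some x) (some a)).card := by
        intro ν a d h; rw [h]
      have hjU : j ∈ Finset.univ.erase i := Finset.mem_erase.2 ⟨Ne.symm hij_ne, Finset.mem_univ j⟩
      have hsplit : ∀ ν : N → Option C, pot I ν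
          = (match ν i with
              | none => 0
              | some c => (Finset.univ.filter fun x => I.Strict c (some x) (some i)).card)
            + ((match ν j with
              | none => 0
              | some c => (Finset.univ.filter fun x => I.Strict c (some x) (some j)).card)
            + ∑ a ∈ (Finset.univ.erase i).erase j, (match ν a with
              | none => 0
              | some c => (Finset.univ.filter fun x => I.Strict c (some x) (some a)).card)) := by
        intro ν
        rw [pot, ← Finset.add_sum_erase _ _ (Finset.mem_univ i),
          ← Finset.add_sum_erase _ _ hjU]
      have htail : ∑ a ∈ (Finset.univ.erase i).erase j, (match μ' a with
            | none => 0
            | some c => (Finset.univ.filter fun x => I.Strict c (some x) (some a)).card)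
          = ∑ a ∈ (Finset.univ.erase i).erase j, (match μ a with
            | none => 0
            | some c => (Finset.univ.filter fun x => I.Strict c (some x) (some a)).card) := by
        refine Finset.sum_congr rfl ?_
        intro a ha
        have h2 : a ≠ j := (Finset.mem_erase.1 ha).1
        have h1 : a ≠ i := (Finset.mem_erase.1 (Finset.mem_of_mem_erase ha)).1
        rw [hμ'other a h1 h2]
      have e1 := hsplit μ
      have e2 := hsplit μ'
      rw [hterm μ i hi0, hterm2 μ j c hjc] at e1
      rw [hterm2 μ' i c hμ'i, hterm μ' j hμ'j, htail] at e2
      -- F i < F j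
      have hFlt : (Finset.univ.filter fun x => I.Strict c (some x) (some i)).card
          < (Finset.univ.filter fun x => I.Strict c (some x) (some j)).card := by
        refine Finset.card_lt_card ?_
        rw [Finset.ssubset_iff_of_subset ?_]
        · exact ⟨i, Finset.mem_filter.2 ⟨Finset.mem_univ i, hij⟩,
            fun h => strict_irrefl I c (some i) (Finset.mem_filter.1 h).2⟩
        · intro x hx
          rw [Finset.mem_filter] at hx ⊢
          exact ⟨hx.1, strict_trans I hx.2 hij⟩
      omega
    -- contradiction with minimality
    have hle : pot I μ ≤ pot I μ' := by
      rw [hpot]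
      exact Nat.sInf_le ⟨μ', hμ', hsize' ▸ hms, rfl⟩
    omega
  · -- μ is a matching of B^{-(insert i R)}, contradicting the drop hypothesis
    push_neg at hbad
    have hμ' : I.MatchingOf (insert i R) μ := by
      refine ⟨hμ.1, ?_, ?_⟩
      · intro a ha
        rcases Finset.mem_insert.1 ha with rfl | ha
        · exact hi0
        · exact hμ.2.1 a ha
      · intro a d had
        refine ⟨(hμ.2.2 a d had).1, ?_⟩
        intro r hr
        rcases Finset.mem_insert.1 hr with rfl | hr
        · exact hbad a d had
        · exact (hμ.2.2 a d had).2 r hr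
    have := msize_le_ms I hμ'
    have := hdrop i hiR
    omega

end Key

section Fold

variable (I : Inst N C)

lemma rrReject_cons (a : N) (l : List N) :
    I.rrReject (a :: l) = if I.ms (insert a (I.rrReject l)) = I.ms (∅ : Finset N)
      then insert a (I.rrReject l) else I.rrReject l := rfl

lemma ms_rrReject (l : List N) : I.ms (I.rrReject l) = I.ms (∅ : Finset N) := by
  induction l with
  | nil => rfl
  | cons a l ih =>
    rw [rrReject_cons]
    split_ifs with h
    exacts [h, ih]

lemma rr_drop (l : List N) :
    ∀ i ∈ l, i ∉ I.rrReject l → I.ms (insert i (I.rrReject l)) < I.ms (∅ : Finset N) := by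
  induction l with
  | nil => intro i hi; exact absurd hi List.not_mem_nil
  | cons a l ih =>
    intro i hi hnot
    rw [rrReject_cons] at hnot ⊢
    rcases List.mem_cons.1 hi with rfl | hil
    · split_ifs at hnot ⊢ with h
      · exact absurd (Finset.mem_insert_self i _) hnot
      · refine lt_of_le_of_ne ?_ h
        calc I.ms (insert i (I.rrReject l)) ≤ I.ms (I.rrReject l) :=
              ms_anti I (Finset.subset_insert i _)
          _ = I.ms (∅ : Finset N) := ms_rrReject I l
    · split_ifs at hnot ⊢ with h
      · have hiR : i ∉ I.rrReject l := fun hh => hnot (Finset.mem_insert_of_mem hh)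
        calc I.ms (insert i (insert a (I.rrReject l)))
            ≤ I.ms (insert i (I.rrReject l)) :=
              ms_anti I (Finset.insert_subset_insert i (Finset.subset_insert a _))
          _ < I.ms (∅ : Finset N) := ih i hil hiR
      · exact ih i hil hnot

end Fold

/-- `ms(B_I^{-R_I}) = |N \ R_I|`; consequently, every matching output by the
RR rule matches exactly the agents in `N \ R_I`: an agent is unmatched iff she is in `R_I`. -/
theorem rr_matches_exactly_non_rejected (I : Inst N C) (order : List N)
    (hb : IsBaseline order) :
    I.ms (I.rrReject order) = (Finset.univ \ I.rrReject order).card ∧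
      ∀ μ : N → Option C, I.IsRROutcome order μ →
        ∀ i : N, μ i = none ↔ i ∈ I.rrReject order := by
  classical
  set R := I.rrReject order with hRdef
  have hdrop : ∀ i ∉ R, I.ms (insert i R) < I.ms R := by
    intro i hi
    rw [ms_rrReject I order]
    exact rr_drop I order i (hb.2 i) hi
  have hmain : I.ms R = (Finset.univ \ R).card := ms_eq_card_of_drop I R hdrop
  refine ⟨hmain, fun μ hμ i => ?_⟩
  obtain ⟨hm, hsize⟩ := hμ
  have hMsub : (Finset.univ.filter fun a => μ a ≠ none) ⊆ Finset.univ \ R := by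
    intro a ha
    rw [Finset.mem_filter] at ha
    exact Finset.mem_sdiff.2 ⟨Finset.mem_univ a, fun haR => ha.2 (hm.2.1 a haR)⟩
  have hcard : (Finset.univ \ R).card ≤ (Finset.univ.filter fun a => μ a ≠ none).card := by
    have : (Finset.univ.filter fun a => μ a ≠ none).card = msize μ := rfl
    rw [this, hsize, hmain]
  have hMeq : (Finset.univ.filter fun a => μ a ≠ none) = Finset.univ \ R :=
    Finset.eq_of_subset_of_card_le hMsub hcard
  constructor
  · intro h0
    by_contra hiR
    have hmem : i ∈ Finset.univ \ R := Finset.mem_sdiff.2 ⟨Finset.mem_univ i, hiR⟩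
    rw [← hMeq, Finset.mem_filter] at hmem
    exact hmem.2 h0
  · intro hiR
    exact hm.2.1 i hiR
end

section
/- The Reverse Rejecting (RR) rule is strategyproof: if agent i's priority decreases from instance I to instance I' (both with the same baseline ordering ≻_π), and the RR rule rejects i for I (i.e., i ∈ R_I, so i is unmatched), then the RR rule rejects i for I' (i.e., i ∈ R_{I'}, so i is unmatched). -/
open scoped Classical

variable {N C : Type*} [Fintype N] [DecidableEq N] [DecidableEq C]

/-- Agent `i`'s priority decreases from instance `I` to instance `I'`: quotas are unchanged,
the rankings restricted to `(N ∪ {∅}) \ {i}` are unchanged, and `i` only moves down: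
for all `x ≠ i`, `x ≿_c i` implies `x ≿'_c i` and `x ≻_c i` implies `x ≻'_c i`. -/
def PrioDecreases (I I' : Inst N C) (i : N) : Prop :=
  I.quota = I'.quota ∧
  (∀ (c : C) (x y : Option N), x ≠ some i → y ≠ some i → (I.prio c x y ↔ I'.prio c x y)) ∧
  (∀ (c : C) (x : Option N), x ≠ some i → I.prio c x (some i) → I'.prio c x (some i)) ∧
  (∀ (c : C) (x : Option N), x ≠ some i → I.Strict c x (some i) → I'.Strict c x (some i))

section AuxRR

variable {N C : Type*} [Fintype N] [DecidableEq N] [DecidableEq C]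

lemma matchingOf_trivial (I : Inst N C) (R : Finset N) :
    I.MatchingOf R (fun _ => none) := by
  refine ⟨fun c => ?_, fun _ _ => rfl, fun j c h => by simp at h⟩
  have : (Finset.univ.filter fun _ : N => (none : Option C) = some c) = ∅ := by
    simp
  simp [this]

lemma ms_le_ms_of (I I' : Inst N C) (X Y : Finset N)
    (h : ∀ μ : N → Option C, I.MatchingOf X μ → I'.MatchingOf Y μ) :
    I.ms X ≤ I'.ms Y := by
  apply csSup_le_csSup
  · refine ⟨Fintype.card N, fun k hk => ?_⟩
    obtain ⟨μ, _, rfl⟩ := hk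
    calc msize μ ≤ Finset.univ.card := Finset.card_filter_le _ _
      _ = Fintype.card N := Finset.card_univ
  · exact ⟨0, (fun _ => none), matchingOf_trivial I X, by simp [msize]⟩
  · rintro k ⟨μ, hμ, rfl⟩
    exact ⟨μ, h μ hμ, rfl⟩

lemma ms_mono (I : Inst N C) {X Y : Finset N} (hXY : X ⊆ Y) : I.ms Y ≤ I.ms X := by
  refine ms_le_ms_of I I Y X (fun μ hμ => ?_)
  obtain ⟨h1, h2, h3⟩ := hμ
  exact ⟨h1, fun r hr => h2 r (hXY hr),
    fun j c hj => ⟨(h3 j c hj).1, fun r hr => (h3 j c hj).2 r (hXY hr)⟩⟩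

lemma strict_i_down {I I' : Inst N C} {i : N} (hdec : PrioDecreases I I' i)
    {c : C} {y : Option N} (hy : y ≠ some i)
    (h : I'.Strict c (some i) y) : I.Strict c (some i) y := by
  obtain ⟨h1, h2⟩ := h
  constructor
  · rcases I.total c (some i) y with h | h
    · exact h
    · exact absurd (hdec.2.2.1 c y hy h) h2
  · exact fun h => h2 (hdec.2.2.1 c y hy h)

lemma strict_iff_of_ne {I I' : Inst N C} {i : N} (hdec : PrioDecreases I I' i)
    {c : C} {x y : Option N} (hx : x ≠ some i) (hy : y ≠ some i) :
    I.Strict c x y ↔ I'.Strict c x y := by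
  unfold Inst.Strict
  rw [hdec.2.1 c x y hx hy, hdec.2.1 c y x hy hx]

lemma ms_le_of_not_mem {I I' : Inst N C} {i : N} (hdec : PrioDecreases I I' i)
    {X : Finset N} (hiX : i ∉ X) : I'.ms X ≤ I.ms X := by
  refine ms_le_ms_of I' I X X (fun μ hμ => ?_)
  obtain ⟨h1, h2, h3⟩ := hμ
  refine ⟨fun c => hdec.1 ▸ h1 c, h2, fun j c hj => ?_⟩
  obtain ⟨hel, hbl⟩ := h3 j c hj
  by_cases hji : j = i
  · subst hji
    refine ⟨strict_i_down hdec (by simp) hel, fun r hr hst => ?_⟩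
    have hri : (some r : Option N) ≠ some j := by
      simp only [ne_eq, Option.some.injEq]
      exact fun h => hiX (h ▸ hr)
    exact hbl r hr (hdec.2.2.2 c (some r) hri hst)
  · have hj' : (some j : Option N) ≠ some i := by simpa using hji
    refine ⟨(strict_iff_of_ne hdec hj' (by simp)).mpr hel, fun r hr hst => ?_⟩
    have hri : (some r : Option N) ≠ some i := by
      simp only [ne_eq, Option.some.injEq]
      exact fun h => hiX (h ▸ hr)
    exact hbl r hr ((strict_iff_of_ne hdec hri hj').mp hst)

lemma ms_le_of_mem {I I' : Inst N C} {i : N} (hdec : PrioDecreases I I' i)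
    {X : Finset N} (hiX : i ∈ X) : I.ms X ≤ I'.ms X := by
  refine ms_le_ms_of I I' X X (fun μ hμ => ?_)
  obtain ⟨h1, h2, h3⟩ := hμ
  refine ⟨fun c => hdec.1 ▸ h1 c, h2, fun j c hj => ?_⟩
  obtain ⟨hel, hbl⟩ := h3 j c hj
  have hji : j ≠ i := by
    intro h; subst h
    rw [h2 j hiX] at hj; exact Option.some_ne_none c hj.symm
  have hj' : (some j : Option N) ≠ some i := by simpa using hji
  refine ⟨(strict_iff_of_ne hdec hj' (by simp)).mp hel, fun r hr hst => ?_⟩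
  by_cases hri : r = i
  · subst hri
    exact hbl r hr (strict_i_down hdec hj' hst)
  · have hri' : (some r : Option N) ≠ some i := by simpa using hri
    exact hbl r hr ((strict_iff_of_ne hdec hri' hj').mpr hst)

noncomputable def rrStep (J : Inst N C) (j : N) (R : Finset N) : Finset N :=
  if J.ms (insert j R) = J.ms (∅ : Finset N) then insert j R else R

lemma rrReject_eq_foldr (J : Inst N C) (l : List N) :
    J.rrReject l = l.foldr (rrStep J) ∅ := rfl

lemma subset_rrStep (J : Inst N C) (j : N) (R : Finset N) : R ⊆ rrStep J j R := by
  unfold rrStep; split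
  · exact Finset.subset_insert _ _
  · exact subset_rfl

lemma rrStep_subset (J : Inst N C) (j : N) (R : Finset N) : rrStep J j R ⊆ insert j R := by
  unfold rrStep; split
  · exact subset_rfl
  · exact Finset.subset_insert _ _

lemma subset_foldr_rrStep (J : Inst N C) (b : Finset N) (l : List N) :
    b ⊆ l.foldr (rrStep J) b := by
  induction l with
  | nil => exact subset_rfl
  | cons x s ih => exact ih.trans (subset_rrStep J x _)

lemma foldr_rrStep_subset (J : Inst N C) (b : Finset N) (l : List N) :
    l.foldr (rrStep J) b ⊆ b ∪ l.toFinset := by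
  induction l with
  | nil => simp
  | cons x s ih =>
    simp only [List.foldr_cons]
    refine (rrStep_subset J x _).trans ?_
    intro a ha
    rcases Finset.mem_insert.mp ha with rfl | ha
    · simp
    · have := ih ha
      simp only [Finset.mem_union, List.mem_toFinset, List.toFinset_cons,
        Finset.mem_insert] at this ⊢
      tauto

lemma foldr_rrStep_suffix_subset (J : Inst N C) (s l : List N) (h : s <:+ l) :
    s.foldr (rrStep J) ∅ ⊆ l.foldr (rrStep J) ∅ := by
  obtain ⟨t, rfl⟩ := h
  rw [List.foldr_append]
  exact subset_foldr_rrStep J _ t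

end AuxRR
/-- The RR rule is strategyproof: if agent `i`'s priority decreases from `I` to
`I'` (same baseline ordering) and the RR rule rejects `i` for `I` (so `i` is unmatched),
then the RR rule rejects `i` for `I'` (so `i` is unmatched). -/
theorem rr_strategyproof (I I' : Inst N C) (i : N) (order : List N)
    (hb : IsBaseline order) (hdec : PrioDecreases I I' i)
    (hrej : i ∈ I.rrReject order) :
    i ∈ I'.rrReject order := by
  classical
  obtain ⟨hnd, hmem⟩ := hb
  obtain ⟨pre, suf, horder⟩ := List.append_of_mem (hmem i)
  subst horder
  have hndp := hnd
  rw [List.nodup_append] at hndp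
  obtain ⟨hndpre, hndis, hdisj⟩ := hndp
  have hipre : i ∉ pre := fun h => hdisj i h i List.mem_cons_self rfl
  have hisuf : i ∉ suf := (List.nodup_cons.mp hndis).1
  set R : Finset N := suf.foldr (rrStep I) ∅ with hR
  have hiR : i ∉ R := by
    intro h
    have := foldr_rrStep_subset I ∅ suf h
    simp only [Finset.empty_union, List.mem_toFinset] at this
    exact hisuf this
  -- extract the rejection condition for i in I
  have hcond : I.ms (insert i R) = I.ms (∅ : Finset N) := by
    by_contra hc
    have hstep : (i :: suf).foldr (rrStep I) ∅ = R := by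
      simp only [List.foldr_cons, ← hR]
      exact if_neg hc
    have : i ∈ (pre ++ i :: suf).foldr (rrStep I) ∅ := hrej
    rw [List.foldr_append, hstep] at this
    have := foldr_rrStep_subset I R pre this
    rcases Finset.mem_union.mp this with h | h
    · exact hiR h
    · exact hipre (List.mem_toFinset.mp h)
  -- I'.ms ∅ = I.ms ∅
  have hms0 : I'.ms (∅ : Finset N) = I.ms (∅ : Finset N) := by
    refine le_antisymm (ms_le_of_not_mem hdec (Finset.notMem_empty i)) ?_
    calc I.ms (∅ : Finset N) = I.ms (insert i R) := hcond.symm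
      _ ≤ I'.ms (insert i R) := ms_le_of_mem hdec (Finset.mem_insert_self i R)
      _ ≤ I'.ms (∅ : Finset N) := ms_mono I' (Finset.empty_subset _)
  -- key: I'.ms (insert i R) = I'.ms ∅
  have hkey : I'.ms (insert i R) = I'.ms (∅ : Finset N) := by
    refine le_antisymm (ms_mono I' (Finset.empty_subset _)) ?_
    calc I'.ms (∅ : Finset N) = I.ms (∅ : Finset N) := hms0
      _ = I.ms (insert i R) := hcond.symm
      _ ≤ I'.ms (insert i R) := ms_le_of_mem hdec (Finset.mem_insert_self i R)
  -- the folds over suffixes of suf coincide for I and I'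
  have hfold : ∀ s : List N, s <:+ suf →
      s.foldr (rrStep I) ∅ = s.foldr (rrStep I') ∅ := by
    intro s hs
    induction s with
    | nil => rfl
    | cons x s ih =>
      have hs' : s <:+ suf := ((List.suffix_cons x s).trans hs)
      have ihs := ih hs'
      set Rs : Finset N := s.foldr (rrStep I) ∅ with hRs
      have hxsuf : x ∈ suf := hs.subset List.mem_cons_self
      have hxi : x ≠ i := fun h => hisuf (h ▸ hxsuf)
      have hiRs : i ∉ Rs := by
        intro h
        have := foldr_rrStep_subset I ∅ s h
        simp only [Finset.empty_union, List.mem_toFinset] at this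
        exact hisuf (hs'.subset this)
      have hiff : (I.ms (insert x Rs) = I.ms (∅ : Finset N)) ↔
          (I'.ms (insert x Rs) = I'.ms (∅ : Finset N)) := by
        constructor
        · intro h
          have hsubR : insert x Rs ⊆ R := by
            have hx : (x :: s).foldr (rrStep I) ∅ = insert x Rs := by
              simp only [List.foldr_cons, ← hRs]
              exact if_pos h
            rw [← hx]
            exact foldr_rrStep_suffix_subset I _ _ hs
          have h1 : I'.ms (insert i R) ≤ I'.ms (insert x Rs) :=
            ms_mono I' (hsubR.trans (Finset.subset_insert i R))
          have h2 : I'.ms (insert x Rs) ≤ I'.ms (∅ : Finset N) :=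
            ms_mono I' (Finset.empty_subset _)
          exact le_antisymm h2 (hkey ▸ h1)
        · intro h
          have hins : i ∉ insert x Rs := by
            simp only [Finset.mem_insert]
            rintro (rfl | hh)
            · exact hxi rfl
            · exact hiRs hh
          have h1 : I.ms (∅ : Finset N) ≤ I.ms (insert x Rs) := by
            calc I.ms (∅ : Finset N) = I'.ms (∅ : Finset N) := hms0.symm
              _ = I'.ms (insert x Rs) := h.symm
              _ ≤ I.ms (insert x Rs) := ms_le_of_not_mem hdec hins
          exact le_antisymm (ms_mono I (Finset.empty_subset _)) h1
      simp only [List.foldr_cons, ← ihs, ← hRs]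
      unfold rrStep
      by_cases hca : I.ms (insert x Rs) = I.ms (∅ : Finset N)
      · rw [if_pos hca, if_pos (hiff.mp hca)]
      · rw [if_neg hca, if_neg (fun h => hca (hiff.mpr h))]
  have hfsuf : suf.foldr (rrStep I') ∅ = R := (hfold suf (List.suffix_refl suf)).symm
  have hstep' : (i :: suf).foldr (rrStep I') ∅ = insert i R := by
    simp only [List.foldr_cons, hfsuf]
    exact if_pos (hfsuf ▸ hkey)
  show i ∈ (pre ++ i :: suf).foldr (rrStep I') ∅
  rw [List.foldr_append, hstep']
  exact subset_foldr_rrStep I' _ pre (Finset.mem_insert_self i R)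
end

section
/- The Reverse Rejecting (RR) rule is weakly non-bossy: if agent i's priority decreases from instance I to instance I' (both with the same baseline ordering ≻_π) and the RR rule rejects i for I (i ∈ R_I), then for every agent j with i ≻_π j, agent j is rejected for I if and only if j is rejected for I' (i.e., R_I ∩ {j : i ≻_π j} = R_{I'} ∩ {j : i ≻_π j}); equivalently, every agent lower than i in the baseline ordering is matched by the RR rule at I if and only if she is matched at I'. -/
/-!
Write the baseline order as `A ++ i :: B`. The agents below `i` are those of `B`, and their
fate is sealed while the RR rule runs through `B`, before `i` is considered. Since `i` is
rejected at `I`, rejecting `i` on top of any rejected set `R` of that run keeps `ms(B_I)`.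
Moving `i` down can only add edges to a reduced graph in which `i` is rejected and only remove
edges from one in which it is not; hence `ms(B_{I'}) = ms(B_I)`, and along the run through `B`
every agent passes the rejection test at `I` iff she passes it at `I'`.
-/

open scoped Classical

variable {N C : Type*} [Fintype N] [DecidableEq N] [DecidableEq C]

namespace Inst

section

variable {N C : Type*} [Fintype N] [DecidableEq C] (I : Inst N C)

lemma ms_le_ms_of_matchingOf {I' : Inst N C} {R R' : Finset N}
    (h : ∀ μ, I.MatchingOf R μ → I'.MatchingOf R' μ) : I.ms R ≤ I'.ms R' := by
  have hunmatched : I.MatchingOf R fun _ => none :=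
    ⟨fun c => by simp, fun _ _ => rfl, fun _ _ h => by simp at h⟩
  unfold Inst.ms
  refine csSup_le ⟨_, _, hunmatched, rfl⟩ ?_
  rintro k ⟨μ, hμ, rfl⟩
  refine le_csSup ⟨Fintype.card N, ?_⟩ ⟨μ, h μ hμ, rfl⟩
  rintro k ⟨ν, _, rfl⟩
  exact (Finset.card_filter_le _ _).trans_eq Finset.card_univ

lemma ms_anti {R R' : Finset N} (h : R ⊆ R') : I.ms R' ≤ I.ms R :=
  I.ms_le_ms_of_matchingOf fun _ ⟨hcap, hR', hedge⟩ =>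
    ⟨hcap, fun j hj => hR' j (h hj),
      fun a c hac => ⟨(hedge a c hac).1, fun j hj => (hedge a c hac).2 j (h hj)⟩⟩

lemma ms_eq_ms_empty_of_subset {R R' : Finset N} (h : R ⊆ R')
    (hR' : I.ms R' = I.ms ∅) : I.ms R = I.ms ∅ :=
  le_antisymm (I.ms_anti R.empty_subset) (hR' ▸ I.ms_anti h)

end

variable (I : Inst N C)

noncomputable def rrStep (a : N) (R : Finset N) : Finset N :=
  if I.ms (insert a R) = I.ms ∅ then insert a R else R

lemma rrReject_cons_s5 (a : N) (l : List N) : I.rrReject (a :: l) = I.rrStep a (I.rrReject l) :=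
  rfl

lemma subset_rrStep (a : N) (R : Finset N) : R ⊆ I.rrStep a R := by
  unfold rrStep
  split_ifs
  exacts [Finset.subset_insert a R, subset_rfl]

lemma mem_rrStep_iff {a j : N} {R : Finset N} (hj : j ≠ a) : j ∈ I.rrStep a R ↔ j ∈ R := by
  unfold rrStep
  split_ifs <;> simp [hj]

lemma ms_insert_eq_of_mem_rrStep {a : N} {R : Finset N} (ha : a ∉ R)
    (h : a ∈ I.rrStep a R) : I.ms (insert a R) = I.ms ∅ := by
  unfold rrStep at h
  split_ifs at h with hms
  exacts [hms, absurd h ha]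

lemma rrStep_congr {I' : Inst N C} {a : N} {R : Finset N}
    (h : I.ms (insert a R) = I.ms ∅ ↔ I'.ms (insert a R) = I'.ms ∅) :
    I.rrStep a R = I'.rrStep a R := by
  simp only [rrStep, h]

lemma mem_rrReject_append_iff {j : N} {l₁ : List N} (hj : j ∉ l₁) (l₂ : List N) :
    j ∈ I.rrReject (l₁ ++ l₂) ↔ j ∈ I.rrReject l₂ := by
  induction l₁ with
  | nil => rfl
  | cons a l ih =>
    rw [List.mem_cons, not_or] at hj
    rw [List.cons_append, rrReject_cons_s5, I.mem_rrStep_iff hj.1, ih hj.2]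

lemma notMem_rrReject {j : N} {l : List N} (hj : j ∉ l) : j ∉ I.rrReject l := by
  intro hjl
  exact Finset.notMem_empty j ((I.mem_rrReject_append_iff hj []).1 (by rwa [List.append_nil]))

end Inst

namespace PrioDecreases

section

variable {N C : Type*} {I I' : Inst N C} {i : N}

lemma strict_iff (hdec : PrioDecreases I I' i) {c : C} {x y : Option N}
    (hx : x ≠ some i) (hy : y ≠ some i) : I.Strict c x y ↔ I'.Strict c x y := by
  unfold Inst.Strict
  rw [hdec.2.1 c x y hx hy, hdec.2.1 c y x hy hx]

lemma strict_of_strict_self (hdec : PrioDecreases I I' i) {c : C} {y : Option N}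
    (hy : y ≠ some i) (h : I'.Strict c (some i) y) : I.Strict c (some i) y := by
  have hnot : ¬ I.prio c y (some i) := fun h' => h.2 (hdec.2.2.1 c y hy h')
  exact ⟨(I.total c (some i) y).resolve_right hnot, hnot⟩

lemma eligible_of_eligible (hdec : PrioDecreases I I' i) {a : N} {c : C}
    (h : I'.Eligible a c) : I.Eligible a c := by
  by_cases ha : a = i
  · subst ha
    exact hdec.strict_of_strict_self (by simp) h
  · exact (hdec.strict_iff (by simp [ha]) (by simp)).mpr h

variable [Fintype N] [DecidableEq C]

lemma matchingOf_of_notMem (hdec : PrioDecreases I I' i) {R : Finset N} (hiR : i ∉ R)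
    {μ : N → Option C} (h : I'.MatchingOf R μ) : I.MatchingOf R μ := by
  obtain ⟨hcap, hR, hedge⟩ := h
  refine ⟨fun c => hdec.1 ▸ hcap c, hR, fun a c hac => ?_⟩
  obtain ⟨hel, hblock⟩ := hedge a c hac
  refine ⟨hdec.eligible_of_eligible hel, fun j hj hs => hblock j hj ?_⟩
  have hji : (some j : Option N) ≠ some i := by
    rintro ⟨⟩
    exact hiR hj
  by_cases hai : a = i
  · subst hai
    exact hdec.2.2.2 c (some j) hji hs
  · exact (hdec.strict_iff hji (by simp [hai])).mp hs

lemma matchingOf_of_mem (hdec : PrioDecreases I I' i) {R : Finset N} (hiR : i ∈ R)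
    {μ : N → Option C} (h : I.MatchingOf R μ) : I'.MatchingOf R μ := by
  obtain ⟨hcap, hR, hedge⟩ := h
  refine ⟨fun c => hdec.1 ▸ hcap c, hR, fun a c hac => ?_⟩
  obtain ⟨hel, hblock⟩ := hedge a c hac
  have hai : a ≠ i := by
    rintro rfl
    simp [hR a hiR] at hac
  refine ⟨(hdec.strict_iff (by simp [hai]) (by simp)).mp hel, fun j hj hs => ?_⟩
  by_cases hji : j = i
  · subst hji
    exact hblock _ hj (hdec.strict_of_strict_self (by simpa using hai) hs)
  · exact hblock j hj ((hdec.strict_iff (by simp [hji]) (by simp [hai])).mpr hs)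

lemma ms_le_of_notMem (hdec : PrioDecreases I I' i) {R : Finset N} (hiR : i ∉ R) :
    I'.ms R ≤ I.ms R :=
  I'.ms_le_ms_of_matchingOf fun _ => hdec.matchingOf_of_notMem hiR

lemma ms_le_of_mem (hdec : PrioDecreases I I' i) {R : Finset N} (hiR : i ∈ R) :
    I.ms R ≤ I'.ms R :=
  I.ms_le_ms_of_matchingOf fun _ => hdec.matchingOf_of_mem hiR

lemma ms_eq_ms_empty_of_notMem (hdec : PrioDecreases I I' i) {R : Finset N} (hiR : i ∉ R)
    (hempty : I'.ms ∅ = I.ms ∅) (h : I'.ms R = I'.ms ∅) : I.ms R = I.ms ∅ :=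
  le_antisymm (I.ms_anti R.empty_subset) (hempty ▸ h ▸ hdec.ms_le_of_notMem hiR)

end

variable {I I' : Inst N C} {i : N}

lemma ms_empty_eq (hdec : PrioDecreases I I' i) {R : Finset N}
    (h : I.ms (insert i R) = I.ms ∅) : I'.ms ∅ = I.ms ∅ := by
  have hi := I.ms_eq_ms_empty_of_subset (Finset.singleton_subset_iff.2 (R.mem_insert_self i)) h
  have h₁ := hdec.ms_le_of_notMem (Finset.notMem_empty i)
  have h₂ := hdec.ms_le_of_mem (Finset.mem_singleton_self i)
  have h₃ := I'.ms_anti (Finset.empty_subset {i})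
  omega

lemma ms_eq_ms_empty_of_ms_insert_eq (hdec : PrioDecreases I I' i) {R : Finset N}
    (h : I.ms (insert i R) = I.ms ∅) : I'.ms R = I'.ms ∅ := by
  have h₁ := hdec.ms_le_of_mem (R.mem_insert_self i)
  have h₂ := I'.ms_anti (R.subset_insert i)
  have h₃ := I'.ms_anti R.empty_subset
  have h₄ := hdec.ms_empty_eq h
  omega

/-- The hypothesis passes to every earlier stage of the run, because rejected sets only grow.
At each stage it makes the tests agree: if `a` passes at `I`, then so does `i` on top of `a`,
which lowering `i` cannot hurt; if `a` passes at `I'`, lowering `i` did not help since `i` is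
not rejected. -/
theorem rrReject_eq (hdec : PrioDecreases I I' i) {l : List N} (hil : i ∉ l)
    (h : I.ms (insert i (I.rrReject l)) = I.ms ∅) : I.rrReject l = I'.rrReject l := by
  induction l with
  | nil => rfl
  | cons a l ih =>
    rw [List.mem_cons, not_or] at hil
    set R := I.rrReject l
    rw [Inst.rrReject_cons_s5] at h
    have hR : I.ms (insert i R) = I.ms ∅ :=
      I.ms_eq_ms_empty_of_subset (Finset.insert_subset_insert i (I.subset_rrStep a R)) h
    rw [Inst.rrReject_cons_s5, Inst.rrReject_cons_s5, ← ih hil.2 hR]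
    refine I.rrStep_congr ⟨fun hc => ?_, fun hc' => ?_⟩
    · rw [Inst.rrStep, if_pos hc] at h
      exact hdec.ms_eq_ms_empty_of_ms_insert_eq h
    · have hiaR : i ∉ insert a R := fun hi =>
        (Finset.mem_insert.1 hi).elim hil.1 (I.notMem_rrReject hil.2)
      exact hdec.ms_eq_ms_empty_of_notMem hiaR (hdec.ms_empty_eq hR) hc'

end PrioDecreases

/-- The RR rule is weakly non-bossy: if agent `i`'s priority decreases from `I`
to `I'` (same baseline ordering) and the RR rule rejects `i` for `I`, then every agent `j`
with `i ≻_π j` is rejected for `I` iff she is rejected for `I'` (equivalently, matched at `I`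
iff matched at `I'`). -/
theorem rr_weakly_non_bossy (I I' : Inst N C) (i : N) (order : List N)
    (hb : IsBaseline order) (hdec : PrioDecreases I I' i)
    (hrej : i ∈ I.rrReject order) :
    ∀ j : N, order.idxOf i < order.idxOf j →
      (j ∈ I.rrReject order ↔ j ∈ I'.rrReject order) := by
  obtain ⟨A, B, rfl⟩ := List.append_of_mem (hb.2 i)
  have hnd := List.nodup_middle.1 hb.1
  rw [List.nodup_cons, List.mem_append, not_or] at hnd
  obtain ⟨⟨hiA, hiB⟩, -⟩ := hnd
  have hcond : I.ms (insert i (I.rrReject B)) = I.ms ∅ :=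
    I.ms_insert_eq_of_mem_rrStep (I.notMem_rrReject hiB)
      ((I.mem_rrReject_append_iff hiA _).1 hrej)
  have hB := hdec.rrReject_eq hiB hcond
  intro j hj
  have hji : j ≠ i := by
    rintro rfl
    exact lt_irrefl _ hj
  have hjA : j ∉ A := by
    intro hjA
    rw [List.idxOf_append_of_notMem hiA, List.idxOf_cons_self, List.idxOf_append_of_mem hjA] at hj
    have := List.idxOf_lt_length_of_mem hjA
    omega
  simp only [Inst.mem_rrReject_append_iff _ hjA, Inst.rrReject_cons_s5, Inst.mem_rrStep_iff _ hji, hB]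
end

section
/- Characterization of RR outcomes: a matching μ complies with the eligibility requirements, respects priorities, and has maximum size among matchings complying with the eligibility requirements if and only if there exists a baseline ordering ≻_π such that μ is a possible output of the Reverse Rejecting (RR) rule run with ≻_π. -/
open scoped Classical

variable {N C : Type*} [Fintype N] [DecidableEq N] [DecidableEq C]

namespace RRaux
set_option linter.unusedSectionVars false

variable {I : Inst N C}

lemma prio_refl (I : Inst N C) (c : C) (x : Option N) : I.prio c x x := by
  rcases I.total c x x with h | h <;> exact h

lemma strict_irrefl (c : C) (x : Option N) : ¬ I.Strict c x x := fun h => h.2 h.1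

lemma strict_of_strict_prio {c : C} {x y z : Option N} (h : I.Strict c x y)
    (h' : I.prio c y z) : I.Strict c x z :=
  ⟨I.trans c x y z h.1 h', fun hzx => h.2 (I.trans c y z x h' hzx)⟩

lemma strict_of_prio_strict {c : C} {x y z : Option N} (h : I.prio c x y)
    (h' : I.Strict c y z) : I.Strict c x z :=
  ⟨I.trans c x y z h h'.1, fun hzx => h'.2 (I.trans c z x y hzx h)⟩

lemma matchingOf_mono {R S : Finset N} (hRS : R ⊆ S) {μ : N → Option C}
    (h : I.MatchingOf S μ) : I.MatchingOf R μ :=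
  ⟨h.1, fun i hi => h.2.1 i (hRS hi),
    fun i c hic => ⟨(h.2.2 i c hic).1, fun j hj => (h.2.2 i c hic).2 j (hRS hj)⟩⟩

lemma matchingOf_none (I : Inst N C) (R : Finset N) :
    I.MatchingOf R (fun _ => none) := by
  refine ⟨fun c => ?_, fun i _ => rfl, fun i c h => by simp at h⟩
  simp [Inst.IsMatching]

lemma msize_le_card (μ : N → Option C) : msize μ ≤ Fintype.card N :=
  (Finset.card_filter_le _ _)

lemma ms_set_bdd (R : Finset N) :
    BddAbove {k | ∃ μ : N → Option C, I.MatchingOf R μ ∧ msize μ = k} :=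
  ⟨Fintype.card N, fun k ⟨μ, _, hk⟩ => hk ▸ msize_le_card μ⟩

lemma msize_le_ms {R : Finset N} {μ : N → Option C} (h : I.MatchingOf R μ) :
    msize μ ≤ I.ms R :=
  le_csSup (ms_set_bdd R) ⟨μ, h, rfl⟩

lemma exists_ms (I : Inst N C) (R : Finset N) :
    ∃ μ : N → Option C, I.MatchingOf R μ ∧ msize μ = I.ms R := by
  have hne : {k | ∃ μ : N → Option C, I.MatchingOf R μ ∧ msize μ = k}.Nonempty :=
    ⟨_, (fun _ => none), matchingOf_none I R, rfl⟩
  exact Nat.sSup_mem hne (ms_set_bdd R)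

lemma ms_anti {R S : Finset N} (hRS : R ⊆ S) : I.ms S ≤ I.ms R := by
  obtain ⟨μ, hμ, hs⟩ := exists_ms I S
  exact hs ▸ msize_le_ms (matchingOf_mono hRS hμ)

noncomputable def rrF (I : Inst N C) (k : N) (c : C) : ℕ :=
  (Finset.univ.filter fun m : N => I.Strict c (some k) (some m)).card

noncomputable def rrPhi (I : Inst N C) (μ : N → Option C) : ℕ :=
  ∑ k : N, (μ k).elim 0 (fun c => rrF I k c + 1)

lemma rrF_lt {c : C} {i j : N} (hji : I.Strict c (some j) (some i)) :
    rrF I i c < rrF I j c := by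
  have hsub : insert i (Finset.univ.filter fun m : N => I.Strict c (some i) (some m)) ⊆
      (Finset.univ.filter fun m : N => I.Strict c (some j) (some m)) := by
    intro m hm
    rcases Finset.mem_insert.1 hm with rfl | hm
    · simpa using hji
    · have := (Finset.mem_filter.1 hm).2
      exact Finset.mem_filter.2 ⟨Finset.mem_univ m, strict_of_prio_strict hji.1 this⟩
  have hni : i ∉ (Finset.univ.filter fun m : N => I.Strict c (some i) (some m)) := by
    simp [strict_irrefl]
  have := Finset.card_le_card hsub
  rw [Finset.card_insert_of_notMem hni] at this
  exact this

lemma rrPhi_le (μ : N → Option C) :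
    rrPhi I μ ≤ Fintype.card N * (Fintype.card N + 1) := by
  have : ∀ k : N, (μ k).elim 0 (fun c => rrF I k c + 1) ≤ Fintype.card N + 1 := by
    intro k
    cases h : μ k with
    | none => simp
    | some c =>
      simp only [Option.elim]
      have : rrF I k c ≤ Fintype.card N := Finset.card_filter_le _ _
      omega
  calc rrPhi I μ ≤ ∑ _k : N, (Fintype.card N + 1) := Finset.sum_le_sum fun k _ => this k
    _ = Fintype.card N * (Fintype.card N + 1) := by
        rw [Finset.sum_const, Finset.card_univ, smul_eq_mul]

lemma swap_step {R : Finset N} {μ : N → Option C} {i j : N} {c : C}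
    (h : I.MatchingOf R μ) (hi : μ i = some c) (hj : μ j = none)
    (hji : I.Strict c (some j) (some i)) :
    I.MatchingOf R (fun k => if k = i then none else if k = j then some c else μ k) ∧
    msize (fun k => if k = i then none else if k = j then some c else μ k) = msize μ ∧
    rrPhi I μ < rrPhi I (fun k => if k = i then none else if k = j then some c else μ k) := by
  set μ' : N → Option C := fun k => if k = i then none else if k = j then some c else μ k
    with hμ'
  have hij : i ≠ j := fun h => by rw [h, hj] at hi; cases hi
  have hjR : j ∉ R := fun hjR => (h.2.2 i c hi).2 j hjR hji
  have hiR : i ∉ R := fun hiR => by rw [h.2.1 i hiR] at hi; cases hi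
  -- the filter for category c
  have hfc : (Finset.univ.filter fun k => μ' k = some c) =
      insert j ((Finset.univ.filter fun k => μ k = some c).erase i) := by
    ext k
    by_cases hk : k = i
    · subst hk
      simp [hμ', hij, Finset.mem_erase]
    · by_cases hk' : k = j
      · subst hk'
        simp [hμ', hk]
      · simp [hμ', hk, hk', Finset.mem_erase]
  have hjmem : j ∉ (Finset.univ.filter fun k => μ k = some c).erase i := by
    simp [hj]
  have himem : i ∈ (Finset.univ.filter fun k => μ k = some c) := by simp [hi]
  have hcardc : (Finset.univ.filter fun k => μ' k = some c).card =
      (Finset.univ.filter fun k => μ k = some c).card := by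
    rw [hfc, Finset.card_insert_of_notMem hjmem, Finset.card_erase_of_mem himem]
    have : 0 < (Finset.univ.filter fun k => μ k = some c).card :=
      Finset.card_pos.2 ⟨i, himem⟩
    omega
  have hcard : ∀ c'' : C, (Finset.univ.filter fun k => μ' k = some c'').card =
      (Finset.univ.filter fun k => μ k = some c'').card := by
    intro c''
    by_cases hcc : c'' = c
    · subst hcc; exact hcardc
    · congr 1
      ext k
      by_cases hk : k = i
      · subst hk; simp [hμ', hi, Ne.symm hcc]
      · by_cases hk' : k = j
        · subst hk'; simp [hμ', hk, hj, Ne.symm hcc]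
        · simp [hμ', hk, hk']
  have hmatch : I.MatchingOf R μ' := by
    refine ⟨fun c'' => (hcard c'') ▸ h.1 c'', fun r hr => ?_, fun k c' hkc' => ?_⟩
    · have hri : r ≠ i := fun hh => hiR (hh ▸ hr)
      have hrj : r ≠ j := fun hh => hjR (hh ▸ hr)
      simp [hμ', hri, hrj, h.2.1 r hr]
    · by_cases hk : k = i
      · subst hk; simp [hμ'] at hkc'
      · by_cases hk' : k = j
        · subst hk'
          have hc' : c = c' := by
            have := hkc'; simp [hμ', hk] at this; exact this
          subst hc'
          refine ⟨strict_of_strict_prio hji (h.2.2 i c hi).1.1, fun r hr hstr => ?_⟩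
          exact (h.2.2 i c hi).2 r hr (strict_of_strict_prio hstr hji.1)
        · have : μ k = some c' := by simpa [hμ', hk, hk'] using hkc'
          exact h.2.2 k c' this
  have hmsize : msize μ' = msize μ := by
    unfold msize
    have : (Finset.univ.filter fun k => μ' k ≠ none) =
        insert j ((Finset.univ.filter fun k => μ k ≠ none).erase i) := by
      ext k
      by_cases hk : k = i
      · subst hk; simp [hμ', hij]
      · by_cases hk' : k = j
        · subst hk'; simp [hμ', hk]
        · simp [hμ', hk, hk', Finset.mem_erase]
    rw [this, Finset.card_insert_of_notMem (by simp [hj]),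
      Finset.card_erase_of_mem (by simp [hi])]
    have : 0 < (Finset.univ.filter fun k => μ k ≠ none).card :=
      Finset.card_pos.2 ⟨i, by simp [hi]⟩
    omega
  refine ⟨hmatch, hmsize, ?_⟩
  -- potential strictly increases
  have hsum : ∀ (ν : N → Option C), rrPhi I ν =
      (ν i).elim 0 (fun c => rrF I i c + 1) + ((ν j).elim 0 (fun c => rrF I j c + 1) +
        ∑ k ∈ (Finset.univ.erase i).erase j, (ν k).elim 0 (fun c => rrF I k c + 1)) := by
    intro ν
    unfold rrPhi
    rw [← Finset.add_sum_erase _ _ (Finset.mem_univ i),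
      ← Finset.add_sum_erase _ _ (Finset.mem_erase.2 ⟨Ne.symm hij, Finset.mem_univ j⟩)]
  have hrest : ∑ k ∈ (Finset.univ.erase i).erase j, (μ' k).elim 0 (fun c => rrF I k c + 1) =
      ∑ k ∈ (Finset.univ.erase i).erase j, (μ k).elim 0 (fun c => rrF I k c + 1) := by
    refine Finset.sum_congr rfl fun k hk => ?_
    have hk1 := (Finset.mem_erase.1 hk).1
    have hk2 := (Finset.mem_erase.1 (Finset.mem_erase.1 hk).2).1
    simp [hμ', hk1, hk2]
  have hμi' : μ' i = none := by simp [hμ']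
  have hμj' : μ' j = some c := by simp [hμ', Ne.symm hij]
  have e1 := hsum μ
  have e2 := hsum μ'
  rw [hi, hj] at e1
  rw [hμi', hμj', hrest] at e2
  simp only [Option.elim_none, Option.elim_some] at e1 e2
  have := rrF_lt (I := I) hji
  omega

lemma swap_aux : ∀ (n : ℕ) (μ : N → Option C),
    Fintype.card N * (Fintype.card N + 1) + 1 ≤ rrPhi I μ + n →
    ∀ (R : Finset N) (i j : N) (c : C), I.MatchingOf R μ → μ i = some c → μ j = none →
      I.Strict c (some j) (some i) →
      ∃ a, a ∉ R ∧ ∃ ν, I.MatchingOf (insert a R) ν ∧ msize ν = msize μ := by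
  intro n
  induction n with
  | zero =>
    intro μ hb
    have := rrPhi_le (I := I) μ
    omega
  | succ n ih =>
    intro μ hb R i j c h hi hj hji
    obtain ⟨hmatch, hmsize, hphi⟩ := swap_step h hi hj hji
    set μ' : N → Option C := fun k => if k = i then none else if k = j then some c else μ k
      with hμ'
    have hμi' : μ' i = none := by simp [hμ']
    have hij : i ≠ j := fun h => by rw [h, hj] at hi; cases hi
    have hiR : i ∉ R := fun hiR => by rw [h.2.1 i hiR] at hi; cases hi
    by_cases hdom : ∃ k c', μ' k = some c' ∧ I.Strict c' (some i) (some k)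
    · obtain ⟨k, c', hkc', hik⟩ := hdom
      obtain ⟨a, ha, ν, hν, hνs⟩ :=
        ih μ' (by omega) R k i c' hmatch hkc' hμi' hik
      exact ⟨a, ha, ν, hν, hνs.trans hmsize⟩
    · refine ⟨i, hiR, μ', ⟨hmatch.1, fun r hr => ?_, fun k c' hkc' => ?_⟩, hmsize⟩
      · rcases Finset.mem_insert.1 hr with rfl | hr
        · exact hμi'
        · exact hmatch.2.1 r hr
      · refine ⟨(hmatch.2.2 k c' hkc').1, fun r hr hstr => ?_⟩
        rcases Finset.mem_insert.1 hr with rfl | hr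
        · exact hdom ⟨k, c', hkc', hstr⟩
        · exact (hmatch.2.2 k c' hkc').2 r hr hstr

lemma swap_final {R : Finset N} {μ : N → Option C} {i j : N} {c : C}
    (h : I.MatchingOf R μ) (hi : μ i = some c) (hj : μ j = none)
    (hji : I.Strict c (some j) (some i)) :
    ∃ a, a ∉ R ∧ ∃ ν, I.MatchingOf (insert a R) ν ∧ msize ν = msize μ :=
  swap_aux (Fintype.card N * (Fintype.card N + 1) + 1) μ (by omega) R i j c h hi hj hji

lemma rr_spec (I : Inst N C) (order : List N) :
    I.ms (I.rrReject order) = I.ms (∅ : Finset N) ∧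
      ∀ j ∈ order, j ∉ I.rrReject order →
        I.ms (insert j (I.rrReject order)) < I.ms (∅ : Finset N) := by
  induction order with
  | nil => exact ⟨rfl, by simp⟩
  | cons i l ih =>
    have hrr : I.rrReject (i :: l) =
        if I.ms (insert i (I.rrReject l)) = I.ms (∅ : Finset N)
          then insert i (I.rrReject l) else I.rrReject l := rfl
    by_cases htest : I.ms (insert i (I.rrReject l)) = I.ms (∅ : Finset N)
    · rw [hrr, if_pos htest]
      refine ⟨htest, fun j hj hj' => ?_⟩
      have hjl : j ∈ l := by
        rcases List.mem_cons.1 hj with rfl | hjl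
        · exact absurd (Finset.mem_insert_self j _) hj'
        · exact hjl
      have hjR : j ∉ I.rrReject l := fun hh => hj' (Finset.mem_insert_of_mem hh)
      have := ih.2 j hjl hjR
      have hmono : I.ms (insert j (insert i (I.rrReject l))) ≤
          I.ms (insert j (I.rrReject l)) :=
        ms_anti (Finset.insert_subset_insert j (Finset.subset_insert i _))
      omega
    · rw [hrr, if_neg htest]
      refine ⟨ih.1, fun j hj hj' => ?_⟩
      rcases List.mem_cons.1 hj with rfl | hjl
      · have hle : I.ms (insert j (I.rrReject l)) ≤ I.ms (∅ : Finset N) :=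
          ms_anti (Finset.empty_subset _)
        omega
      · exact ih.2 j hjl hj'

end RRaux

open RRaux

/-- Characterization of RR outcomes: a matching complies with the eligibility
requirements, respects priorities, and has maximum size among matchings complying with the
eligibility requirements iff it is a possible output of the RR rule for some baseline
ordering. -/
theorem rr_characterization (I : Inst N C) (μ : N → Option C) :
    (I.IsMatching μ ∧ (∀ (i : N) (c : C), μ i = some c → I.Eligible i c) ∧
        (¬ ∃ (i j : N) (c : C), μ i = some c ∧ μ j = none ∧ I.Strict c (some j) (some i)) ∧
        msize μ = I.ms (∅ : Finset N)) ↔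
      ∃ order : List N, IsBaseline order ∧ I.IsRROutcome order μ := by
  constructor
  · rintro ⟨hm, helig, hnv, hmax⟩
    classical
    set U : Finset N := Finset.univ.filter (fun i => μ i = none) with hU
    have hMU : ∀ S : Finset N, S ⊆ U → I.MatchingOf S μ := by
      intro S hS
      refine ⟨hm, fun i hi => (Finset.mem_filter.1 (hS hi)).2, fun i c hic =>
        ⟨helig i c hic, fun j hj hstr => hnv ⟨i, j, c, hic, ?_, hstr⟩⟩⟩
      exact (Finset.mem_filter.1 (hS hj)).2
    set f : N → Finset N → Finset N :=
      fun i R => if I.ms (insert i R) = I.ms (∅ : Finset N) then insert i R else R with hf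
    set l1 : List N := (Finset.univ.filter (fun i => μ i ≠ none)).toList with hl1
    set l2 : List N := U.toList with hl2
    have hbase : IsBaseline (l1 ++ l2) := by
      constructor
      · rw [List.nodup_append]
        refine ⟨Finset.nodup_toList _, Finset.nodup_toList _, fun a ha b hb => ?_⟩
        rw [hl1, Finset.mem_toList, Finset.mem_filter] at ha
        rw [hl2, Finset.mem_toList, hU, Finset.mem_filter] at hb
        rintro rfl; exact ha.2 hb.2
      · intro i
        rw [List.mem_append, hl1, hl2, Finset.mem_toList, Finset.mem_toList, hU,
          Finset.mem_filter, Finset.mem_filter]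
        by_cases h : μ i = none
        · exact Or.inr ⟨Finset.mem_univ i, h⟩
        · exact Or.inl ⟨Finset.mem_univ i, h⟩
    have stepA : ∀ l : List N, (∀ j ∈ l, j ∈ U) → List.foldr f ∅ l = l.toFinset := by
      intro l
      induction l with
      | nil => intro _; simp
      | cons j t ih =>
        intro hmemU
        have hIH : List.foldr f ∅ t = t.toFinset := ih fun a ha => hmemU a (List.mem_cons_of_mem j ha)
        have hsub : insert j t.toFinset ⊆ U := by
          intro a ha
          rcases Finset.mem_insert.1 ha with rfl | ha
          · exact hmemU a List.mem_cons_self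
          · exact hmemU a (List.mem_cons_of_mem j (List.mem_toFinset.1 ha))
        have htest : I.ms (insert j t.toFinset) = I.ms (∅ : Finset N) := by
          have h1 : msize μ ≤ I.ms (insert j t.toFinset) := msize_le_ms (hMU _ hsub)
          have h2 : I.ms (insert j t.toFinset) ≤ I.ms (∅ : Finset N) :=
            ms_anti (Finset.empty_subset _)
          omega
        rw [List.foldr_cons, hIH]; simp only [hf, if_pos htest, List.toFinset_cons]
    have hl2U : List.foldr f ∅ l2 = U := by
      rw [stepA l2 (fun j hj => by rwa [hl2, Finset.mem_toList] at hj), hl2,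
        Finset.toList_toFinset]
    have hcardμ : msize μ = Fintype.card N - U.card := by
      have : (Finset.univ.filter fun i => μ i ≠ none) = Finset.univ \ U := by
        ext a; simp [hU]
      rw [msize, this, Finset.card_sdiff_of_subset (Finset.subset_univ U), Finset.card_univ]
    have stepB : ∀ l : List N, (∀ i ∈ l, μ i ≠ none) → List.foldr f U l = U := by
      intro l
      induction l with
      | nil => intro _; rfl
      | cons i t ih =>
        intro hmatched
        have hIH : List.foldr f U t = U := ih fun a ha => hmatched a (List.mem_cons_of_mem i ha)
        have hiU : i ∉ U := by
          rw [hU, Finset.mem_filter]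
          exact fun hh => hmatched i List.mem_cons_self hh.2
        have htest : I.ms (insert i U) ≠ I.ms (∅ : Finset N) := by
          obtain ⟨ν, hν, hνs⟩ := exists_ms I (insert i U)
          have hsub : (Finset.univ.filter fun k => ν k ≠ none) ⊆ Finset.univ \ insert i U := by
            intro a ha
            rw [Finset.mem_sdiff]
            refine ⟨Finset.mem_univ a, fun haU => ?_⟩
            exact (Finset.mem_filter.1 ha).2 (hν.2.1 a haU)
          have hcard : msize ν ≤ Fintype.card N - (U.card + 1) := by
            have := Finset.card_le_card hsub
            rwa [Finset.card_sdiff_of_subset (Finset.subset_univ _), Finset.card_univ,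
              Finset.card_insert_of_notMem hiU] at this
          have hUlt : U.card + 1 ≤ Fintype.card N := by
            have := Finset.card_le_card (Finset.subset_univ (insert i U))
            rwa [Finset.card_insert_of_notMem hiU, Finset.card_univ] at this
          omega
        rw [List.foldr_cons, hIH]; simp only [hf, if_neg htest]
    have hrr : I.rrReject (l1 ++ l2) = U := by
      rw [Inst.rrReject, List.foldr_append]
      rw [show (List.foldr (fun i R =>
          if I.ms (insert i R) = I.ms (∅ : Finset N) then insert i R else R) ∅ l2) =
        List.foldr f ∅ l2 from rfl, hl2U]
      exact stepB l1 fun a ha => by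
        rw [hl1, Finset.mem_toList, Finset.mem_filter] at ha
        exact ha.2
    have hMUμ : I.MatchingOf U μ := hMU U (le_refl U)
    refine ⟨l1 ++ l2, hbase, ?_, ?_⟩
    · rw [hrr]; exact hMUμ
    · rw [hrr]
      have h1 : msize μ ≤ I.ms U := msize_le_ms hMUμ
      have h2 : I.ms U ≤ I.ms (∅ : Finset N) := ms_anti (Finset.empty_subset _)
      omega
  · rintro ⟨order, ⟨hnd, hmem⟩, hout⟩
    obtain ⟨hms, hlt⟩ := rr_spec I order
    refine ⟨hout.1.1, fun i c h => (hout.1.2.2 i c h).1, ?_, hout.2.trans hms⟩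
    rintro ⟨i, j, c, hi, hj, hji⟩
    obtain ⟨a, haR, ν, hν, hνs⟩ := swap_final hout.1 hi hj hji
    have h1 : msize ν ≤ I.ms (insert a (I.rrReject order)) := msize_le_ms hν
    have h2 := hlt a (hmem a) haR
    have h3 := hout.2
    omega
end

section
/- The Reverse Rejecting (RR) rule is not non-bossy: there exist an instance I, a baseline ordering ≻_π, an agent i rejected by the RR rule for I (i ∈ R_I), and an instance I' obtained from I by decreasing i's priority, such that the set of rejected agents changes, i.e., R_I ≠ R_{I'} (equivalently, the set of agents matched by the RR rule differs between I and I'). -/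
open scoped Classical

variable {N C : Type*} [Fintype N] [DecidableEq N] [DecidableEq C]

def rkI : Fin 2 → Option (Fin 4) → ℕ :=
  fun c x => x.elim (![1, 2] c) (fun k => ![![0,1,0,0], ![0,1,1,0]] c k)

def rkI' : Fin 2 → Option (Fin 4) → ℕ :=
  fun c x => x.elim (![1, 2] c) (fun k => ![![0,1,0,0], ![0,1,1,1]] c k)

def exI : Inst (Fin 4) (Fin 2) where
  quota := fun _ => 1
  prio := fun c x y => rkI c x ≤ rkI c y
  total := fun _ x y => le_total _ _
  trans := fun _ _ _ _ h1 h2 => le_trans h1 h2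

def exI' : Inst (Fin 4) (Fin 2) where
  quota := fun _ => 1
  prio := fun c x y => rkI' c x ≤ rkI' c y
  total := fun _ x y => le_total _ _
  trans := fun _ _ _ _ h1 h2 => le_trans h1 h2

instance (c x y) : Decidable (exI.prio c x y) :=
  inferInstanceAs (Decidable (rkI c x ≤ rkI c y))

instance (c x y) : Decidable (exI'.prio c x y) :=
  inferInstanceAs (Decidable (rkI' c x ≤ rkI' c y))

section DecInst

variable (I : Inst (Fin 4) (Fin 2)) [hp : ∀ c x y, Decidable (I.prio c x y)]

instance decStrict (c x y) : Decidable (I.Strict c x y) :=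
  inferInstanceAs (Decidable (I.prio c x y ∧ ¬ I.prio c y x))

instance decElig (i c) : Decidable (I.Eligible i c) :=
  inferInstanceAs (Decidable (I.Strict c (some i) none))

instance decIsMatching (μ : Fin 4 → Option (Fin 2)) : Decidable (I.IsMatching μ) :=
  inferInstanceAs (Decidable (∀ c, (Finset.univ.filter fun i => μ i = some c).card ≤ I.quota c))

instance decMatchingOf (R : Finset (Fin 4)) (μ : Fin 4 → Option (Fin 2)) :
    Decidable (I.MatchingOf R μ) :=
  inferInstanceAs (Decidable (I.IsMatching μ ∧ (∀ i ∈ R, μ i = none) ∧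
    ∀ i c, μ i = some c → I.Eligible i c ∧ ∀ j ∈ R, ¬ I.Strict c (some j) (some i)))

end DecInst

lemma ms_eq (I : Inst (Fin 4) (Fin 2)) (R : Finset (Fin 4)) (k : ℕ)
    (μ0 : Fin 4 → Option (Fin 2)) (h0 : I.MatchingOf R μ0) (h1 : msize μ0 = k)
    (hub : ∀ μ, I.MatchingOf R μ → msize μ ≤ k) : I.ms R = k := by
  refine le_antisymm (csSup_le ⟨k, μ0, h0, h1⟩ ?_) (le_csSup ⟨k, ?_⟩ ⟨μ0, h0, h1⟩)
  · rintro x ⟨μ, hμ, rfl⟩; exact hub μ hμ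
  · rintro x ⟨μ, hμ, rfl⟩; exact hub μ hμ


lemma msI0 : exI.ms ∅ = 2 :=
  ms_eq _ _ _ ![some 1, none, some 0, none] (by decide) (by decide) (by decide)

lemma msI3 : exI.ms {3} = 2 :=
  ms_eq _ _ _ ![some 1, none, some 0, none] (by decide) (by decide) (by decide)

lemma msI23 : exI.ms {2, 3} = 1 :=
  ms_eq _ _ _ ![some 0, none, none, none] (by decide) (by decide) (by decide)

lemma msI13 : exI.ms {1, 3} = 2 :=
  ms_eq _ _ _ ![some 1, none, some 0, none] (by decide) (by decide) (by decide)

lemma msI013 : exI.ms {0, 1, 3} = 1 :=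
  ms_eq _ _ _ ![none, none, some 0, none] (by decide) (by decide) (by decide)

lemma msJ0 : exI'.ms ∅ = 2 :=
  ms_eq _ _ _ ![some 1, none, some 0, none] (by decide) (by decide) (by decide)

lemma msJ3 : exI'.ms {3} = 2 :=
  ms_eq _ _ _ ![some 1, none, some 0, none] (by decide) (by decide) (by decide)

lemma msJ23 : exI'.ms {2, 3} = 2 :=
  ms_eq _ _ _ ![some 0, some 1, none, none] (by decide) (by decide) (by decide)

lemma msJ123 : exI'.ms {1, 2, 3} = 1 :=
  ms_eq _ _ _ ![some 0, none, none, none] (by decide) (by decide) (by decide)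

lemma msJ023 : exI'.ms {0, 2, 3} = 0 :=
  ms_eq _ _ _ (fun _ => none) (by decide) (by decide) (by decide)

lemma rrI : exI.rrReject [0, 1, 2, 3] = {1, 3} := by
  unfold Inst.rrReject
  simp [msI0, msI3, msI23, msI13, msI013]

lemma rrJ : exI'.rrReject [0, 1, 2, 3] = {2, 3} := by
  unfold Inst.rrReject
  simp [msJ0, msJ3, msJ23, msJ123, msJ023]

/-- The RR rule is not non-bossy: there exist an instance `I`, a baseline
ordering, an agent `i` rejected by the RR rule for `I`, and an instance `I'` obtained from
`I` by decreasing `i`'s priority, such that the set of rejected agents (equivalently, the set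
of matched agents) changes. -/
theorem rr_not_non_bossy :
    ∃ (n m : ℕ) (I I' : Inst (Fin n) (Fin m)) (order : List (Fin n)) (i : Fin n),
      IsBaseline order ∧ PrioDecreases I I' i ∧ i ∈ I.rrReject order ∧
        I.rrReject order ≠ I'.rrReject order := by
  refine ⟨4, 2, exI, exI', [0, 1, 2, 3], 3, ⟨by decide, by decide⟩, ⟨rfl, by decide, by decide, by decide⟩, ?_, ?_⟩
  · rw [rrI]; decide
  · rw [rrI, rrJ]; decide
end

section
/- Assume each agent is eligible for at most one preferential category and all categories' priorities are consistent with the baseline ordering. Then the outcome of the minimum-guarantees rule (i) complies with the eligibility requirements, (ii) is a maximum beneficiary assignment, (iii) respects priorities, (iv) is non-wasteful, and (v) is order preserving for q_{c_u^1} = 0 and q_{c_u^2} = q_{c_u}. -/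
open scoped Classical

variable {N C : Type*} [Fintype N] [DecidableEq N] [DecidableEq C]

/-- `μ` complies with the eligibility requirements. -/
def Complies (I : Inst N C) (μ : N → Option C) : Prop :=
  ∀ (i : N) (c : C), μ i = some c → I.Eligible i c

/-- `μ` respects priorities: no unmatched agent has strictly higher priority for some
category than an agent matched to it. -/
def RespectsPriorities (I : Inst N C) (μ : N → Option C) : Prop :=
  ¬ ∃ (i j : N) (c : C), μ i = some c ∧ μ j = none ∧ I.Strict c (some j) (some i)

/-- The number of agents matched to category `c` by `μ`. -/
def catCount (μ : N → Option C) (c : C) : ℕ :=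
  (Finset.univ.filter fun i => μ i = some c).card

/-- `μ` is non-wasteful: an eligible agent is only left unmatched if all units of the
category are used. -/
def NonWasteful (I : Inst N C) (μ : N → Option C) : Prop :=
  ∀ (i : N) (c : C), I.Eligible i c → μ i = none → catCount μ c = I.quota c

/-- The number of agents matched to a preferential category (a category other than the
unreserved category `cu`). -/
def beneCount (cu : C) (μ : N → Option C) : ℕ :=
  (Finset.univ.filter fun i => μ i ≠ none ∧ μ i ≠ some cu).card

/-- `μ` is a maximum beneficiary assignment: it maximizes the number of agents matched to
preferential categories among all matchings complying with the eligibility requirements. -/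
def MaxBene (I : Inst N C) (cu : C) (μ : N → Option C) : Prop :=
  ∀ ν : N → Option C, I.IsMatching ν → Complies I ν → beneCount cu ν ≤ beneCount cu μ

/-- The priorities are consistent with the baseline ordering: for each category the
eligible agents are ranked according to `≻_π`. -/
def Consistent (I : Inst N C) (order : List N) : Prop :=
  ∀ (c : C) (i j : N), I.Eligible i c → I.Eligible j c →
    (I.Strict c (some i) (some j) ↔ order.idxOf i < order.idxOf j)

/-- Each agent is eligible for at most one preferential category. -/
def OneCategory (I : Inst N C) (cu : C) : Prop :=
  ∀ (i : N) (c c' : C), c ≠ cu → c' ≠ cu → I.Eligible i c → I.Eligible i c' → c = c'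

/-- One step of the minimum-guarantees rule: the considered agent is matched to a
preferential category she is eligible for if a unit of it remains, and otherwise to the
unreserved category if an unreserved unit remains. -/
noncomputable def mgStep (I : Inst N C) (cu : C) (μ : N → Option C) (i : N) : N → Option C :=
  if h : ∃ c, c ≠ cu ∧ I.Eligible i c ∧ catCount μ c < I.quota c then
    Function.update μ i (some h.choose)
  else if catCount μ cu < I.quota cu then Function.update μ i (some cu)
  else μ

/-- The outcome of the minimum-guarantees rule: the agents are considered in order of the
baseline ordering from highest to lowest priority. -/
noncomputable def mgOutcome (I : Inst N C) (cu : C) (order : List N) : N → Option C :=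
  order.foldl (mgStep I cu) fun _ => none

/-- Order preservation for `q_{c_u^1} = 0` and `q_{c_u^2} = q_{c_u}` (the unreserved
category `cu` plays the role of `c_u^2`, and no agent is matched to `c_u^1`, so clause (i)
is vacuous): if `μ(j) ∈ C_p`, `i ≻_{μ(j)} j`, and `i` is eligible for `μ(j)`, then
`μ(i) ≠ c_u^2 = cu`. -/
def OrderPreservingMG (I : Inst N C) (cu : C) (μ : N → Option C) : Prop :=
  ∀ (i j : N) (ci cj : C), μ i = some ci → μ j = some cj → cj ≠ cu →
    I.Strict cj (some i) (some j) → I.Eligible i cj → ci ≠ cu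

/-- One step of the first phase of the over-and-above rule: the considered agent `i` is
matched to the unreserved category only if an unreserved unit remains and, for any
preferential category `c` that `i` is eligible for, at least `q_c` agents of `N_c` other
than `i` are still unmatched. -/
noncomputable def oaStep (I : Inst N C) (cu : C) (σ : N → Option C) (i : N) : N → Option C :=
  if catCount σ cu < I.quota cu ∧
      ∀ c : C, c ≠ cu → I.Eligible i c →
        I.quota c ≤ (Finset.univ.filter fun j => j ≠ i ∧ I.Eligible j c ∧ σ j = none).card then
    Function.update σ i (some cu)
  else σ

/-- The first phase of the over-and-above rule (allocation of the unreserved units),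
considering the agents in order of the baseline ordering from highest to lowest priority. -/
noncomputable def oaPhase1 (I : Inst N C) (cu : C) (order : List N) : N → Option C :=
  order.foldl (oaStep I cu) fun _ => none

/-- The outcome of the over-and-above rule: after the first phase, each preferential
category `c` is filled with the `min {q_c, |N_c|}` highest (baseline) priority agents of
`N_c` who are still unmatched. -/
noncomputable def oaOutcome (I : Inst N C) (cu : C) (order : List N) : N → Option C :=
  fun i =>
    if oaPhase1 I cu order i = some cu then some cu
    else if h : ∃ c, c ≠ cu ∧ I.Eligible i c ∧
        (Finset.univ.filter fun j => I.Eligible j c ∧ oaPhase1 I cu order j = none ∧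
          order.idxOf j < order.idxOf i).card < I.quota c then
      some h.choose
    else none

/-- Order preservation for `q_{c_u^1} = q_{c_u}` and `q_{c_u^2} = 0` (the unreserved
category `cu` plays the role of `c_u^1`, and no agent is matched to `c_u^2`, so clause (ii)
is vacuous): if `μ(i) ∈ C_p`, `i ≻_{μ(j)} j`, and `j` is eligible for `μ(i)`, then
`μ(j) ≠ c_u^1 = cu`. -/
def OrderPreservingOA (I : Inst N C) (cu : C) (μ : N → Option C) : Prop :=
  ∀ (i j : N) (ci cj : C), μ i = some ci → μ j = some cj → ci ≠ cu →
    I.Strict cj (some i) (some j) → I.Eligible j ci → cj ≠ cu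

/-!
The rule never takes a unit back, so every category count only grows as the agents are processed
in baseline order. Whether agent `j` is left unmatched, or sent to `cu`, is decided by the counts
just before `j` is considered: it happens only when the categories she is eligible for (resp. her
preferential categories) are full at that moment. As category priorities agree with the baseline
order, an agent ranked above `j` for a category was processed earlier, and monotonicity of the
counts turns priority respect, non-wastefulness and order preservation into comparisons of counts
at two moments. If each agent has at most one preferential category, a preferential category `c`
left below quota has received all of `N_c`; hence it holds `min (q_c, |N_c|)` agents, the most any
complying matching can give it, and summing over `c` gives maximality.
-/

open Finset Function

section

variable {N C : Type*} {I : Inst N C}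

theorem Inst.Eligible.of_strict {c : C} {i j : N} (hs : I.Strict c (some j) (some i))
    (hi : I.Eligible i c) : I.Eligible j c :=
  ⟨I.trans c _ _ _ hs.1 hi.1, fun h => hi.2 (I.trans c _ _ _ h hs.1)⟩

theorem Complies.update_some [DecidableEq N] {μ : N → Option C} {i : N} {d : C}
    (h : Complies I μ) (he : I.Eligible i d) : Complies I (update μ i (some d)) := by
  intro k c hk
  rcases eq_or_ne k i with rfl | hki
  · rw [update_self, Option.some.injEq] at hk
    exact hk ▸ he
  · exact h k c (by rwa [update_of_ne hki] at hk)

theorem catCount_le_card_eligible [Fintype N] [DecidableEq C] {ν : N → Option C}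
    (h : Complies I ν) (c : C) :
    catCount ν c ≤ #{k | I.Eligible k c} :=
  card_le_card (monotone_filter_right _ fun k _ hk => h k c hk)

theorem beneCount_le_of_catCount_le [Fintype N] [DecidableEq C] {cu : C} {μ ν : N → Option C}
    (h : ∀ c, c ≠ cu → catCount ν c ≤ catCount μ c) : beneCount cu ν ≤ beneCount cu μ := by
  set T : Finset (Option C) := ((univ.image ν).erase none).erase (some cu)
  have hT : ∀ x ∈ T, x ≠ none ∧ x ≠ some cu := fun x hx => by
    simp only [T, mem_erase] at hx
    exact ⟨hx.2.1, hx.1⟩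
  calc beneCount cu ν = #{i | ν i ∈ T} := by
        unfold beneCount
        congr 1
        ext i
        simp [T, and_comm]
    _ = ∑ x ∈ T, #{i | ν i = x} := (sum_card_fiberwise_eq_card_filter _ _ _).symm
    _ ≤ ∑ x ∈ T, #{i | μ i = x} := by
        refine sum_le_sum fun x hx => ?_
        obtain ⟨hnone, hcu⟩ := hT x hx
        obtain ⟨c, rfl⟩ := Option.ne_none_iff_exists'.1 hnone
        exact h c fun hc => hcu (hc ▸ rfl)
    _ = #{i | μ i ∈ T} := sum_card_fiberwise_eq_card_filter _ _ _
    _ ≤ beneCount cu μ := card_le_card (monotone_filter_right _ fun i _ hi => hT _ hi)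

end

variable {I : Inst N C} {cu : C}

section Update

variable {μ : N → Option C} {i : N} {c d : C}

theorem catCount_le_catCount_update (hi : μ i = none) (x : Option C) :
    catCount μ c ≤ catCount (update μ i x) c := by
  refine card_le_card (monotone_filter_right _ fun k _ hk => ?_)
  rwa [update_of_ne (by rintro rfl; simp_all)]

theorem catCount_update_le_of_ne (h : c ≠ d) :
    catCount (update μ i (some d)) c ≤ catCount μ c := by
  refine card_le_card (monotone_filter_right _ fun k _ hk => ?_)
  rcases eq_or_ne k i with rfl | hki
  · simp_all
  · rwa [update_of_ne hki] at hk

theorem catCount_update_le : catCount (update μ i (some d)) c ≤ catCount μ c + 1 := by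
  calc catCount (update μ i (some d)) c
      ≤ #(insert i (univ.filter fun k => μ k = some c)) := by
        refine card_le_card fun k hk => ?_
        rcases eq_or_ne k i with rfl | hki
        · exact mem_insert_self _ _
        · simp_all
    _ ≤ catCount μ c + 1 := card_insert_le _ _

theorem Inst.IsMatching.update_some (h : I.IsMatching μ) (hd : catCount μ d < I.quota d)
    (i : N) : I.IsMatching (update μ i (some d)) := by
  intro c
  rcases eq_or_ne c d with rfl | hcd
  · exact catCount_update_le.trans hd
  · exact (catCount_update_le_of_ne hcd).trans (h c)

end Update

section Step

variable {μ : N → Option C} {i j : N} {c : C}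

theorem mgStep_apply_of_ne (h : j ≠ i) : mgStep I cu μ i j = μ j := by
  unfold mgStep
  split_ifs <;> simp [update_of_ne h]

theorem catCount_le_catCount_mgStep (hi : μ i = none) :
    catCount μ c ≤ catCount (mgStep I cu μ i) c := by
  unfold mgStep
  split_ifs
  exacts [catCount_le_catCount_update hi _, catCount_le_catCount_update hi _, le_rfl]

theorem Inst.IsMatching.mgStep (h : I.IsMatching μ) (i : N) : I.IsMatching (mgStep I cu μ i) := by
  unfold _root_.mgStep
  split_ifs with hp hu
  exacts [h.update_some hp.choose_spec.2.2 i, h.update_some hu i, h]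

theorem Complies.mgStep (hcuE : ∀ i, I.Eligible i cu) (h : Complies I μ) (i : N) :
    Complies I (mgStep I cu μ i) := by
  unfold _root_.mgStep
  split_ifs with hp
  exacts [h.update_some hp.choose_spec.2.1, h.update_some (hcuE i), h]

theorem quota_le_catCount_of_mgStep_self_eq_none (h : mgStep I cu μ j j = none)
    (he : I.Eligible j c) : I.quota c ≤ catCount μ c := by
  unfold mgStep at h
  split_ifs at h with hp hu
  · simp at h
  · simp at h
  · rcases eq_or_ne c cu with rfl | hc
    · exact not_lt.1 hu
    · exact not_lt.1 fun hlt => hp ⟨c, hc, he, hlt⟩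

theorem catCount_lt_quota_of_mgStep_self_eq_some (hj : μ j = none)
    (h : mgStep I cu μ j j = some c) : catCount μ c < I.quota c := by
  unfold mgStep at h
  split_ifs at h with hp hu
  · rw [update_self, Option.some.injEq] at h
    exact h ▸ hp.choose_spec.2.2
  · rw [update_self, Option.some.injEq] at h
    exact h ▸ hu
  · simp_all

theorem quota_le_catCount_of_mgStep_self_eq_some_cu (h : mgStep I cu μ j j = some cu)
    (hc : c ≠ cu) (he : I.Eligible j c) : I.quota c ≤ catCount μ c := by
  refine not_lt.1 fun hlt => ?_
  have hp : ∃ c, c ≠ cu ∧ I.Eligible j c ∧ catCount μ c < I.quota c := ⟨c, hc, he, hlt⟩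
  rw [mgStep, dif_pos hp, update_self, Option.some.injEq] at h
  exact hp.choose_spec.1 h

end Step

section Run

variable {l s t : List N} {μ : N → Option C} {i j : N} {c : C}

theorem foldl_mgStep_apply_of_not_mem (h : j ∉ l) : l.foldl (mgStep I cu) μ j = μ j := by
  induction l generalizing μ with
  | nil => rfl
  | cons a rest ih =>
    rw [List.foldl_cons, ih (fun hj => h (List.mem_cons_of_mem a hj)),
      mgStep_apply_of_ne (List.ne_of_not_mem_cons h)]

theorem mgOutcome_apply_of_not_mem (h : j ∉ l) : mgOutcome I cu l j = none :=
  foldl_mgStep_apply_of_not_mem h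

theorem catCount_le_catCount_foldl_mgStep (hl : l.Nodup) (hμ : ∀ i ∈ l, μ i = none) :
    catCount μ c ≤ catCount (l.foldl (mgStep I cu) μ) c := by
  induction l generalizing μ with
  | nil => exact le_rfl
  | cons a rest ih =>
    obtain ⟨ha, hrest⟩ := List.nodup_cons.1 hl
    refine (catCount_le_catCount_mgStep (hμ a List.mem_cons_self)).trans (ih hrest fun k hk => ?_)
    rw [mgStep_apply_of_ne (ne_of_mem_of_not_mem hk ha)]
    exact hμ k (List.mem_cons_of_mem a hk)

theorem catCount_mgOutcome_le_of_prefix (h : s <+: t) (ht : t.Nodup) :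
    catCount (mgOutcome I cu s) c ≤ catCount (mgOutcome I cu t) c := by
  obtain ⟨r, rfl⟩ := h
  rw [mgOutcome, mgOutcome, List.foldl_append]
  exact catCount_le_catCount_foldl_mgStep ht.of_append_right fun k hk =>
    mgOutcome_apply_of_not_mem fun hks => List.disjoint_of_nodup_append ht hks hk

theorem mgOutcome_append_cons_apply (hj : j ∉ t) :
    mgOutcome I cu (s ++ j :: t) j = mgStep I cu (mgOutcome I cu s) j j := by
  rw [mgOutcome, List.foldl_append, List.foldl_cons, foldl_mgStep_apply_of_not_mem hj]
  rfl

theorem isMatching_mgOutcome (l : List N) : I.IsMatching (mgOutcome I cu l) :=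
  List.foldlRecOn l _ (fun c => by simp) fun _ h i _ => h.mgStep i

theorem complies_mgOutcome (hcuE : ∀ i, I.Eligible i cu) (l : List N) :
    Complies I (mgOutcome I cu l) :=
  List.foldlRecOn l _ (fun _ _ h => by simp at h) fun _ h i _ => h.mgStep hcuE i

end Run

noncomputable def mgOutcomeBefore (I : Inst N C) (cu : C) (l : List N) (j : N) : N → Option C :=
  mgOutcome I cu (l.take (l.idxOf j))

section Before

variable {l : List N} {i j : N} {c : C}

theorem mgOutcomeBefore_self : mgOutcomeBefore I cu l j j = none :=
  mgOutcome_apply_of_not_mem fun hj =>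
    (List.mem_take_iff_idxOf_lt (List.mem_of_mem_take hj)).1 hj |>.false

theorem mgOutcome_apply_eq_mgStep (hl : l.Nodup) (hj : j ∈ l) :
    mgOutcome I cu l j = mgStep I cu (mgOutcomeBefore I cu l j) j j := by
  have hsplit : l = l.take (l.idxOf j) ++ j :: l.drop (l.idxOf j + 1) := by
    have hlt := List.idxOf_lt_length_iff.2 hj
    conv_lhs => rw [← List.take_append_drop (l.idxOf j) l, ← List.getElem_cons_drop hlt,
      List.getElem_idxOf hlt]
  have hjt : j ∉ l.drop (l.idxOf j + 1) := by
    rw [hsplit, List.nodup_middle, List.nodup_cons] at hl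
    exact fun h => hl.1 (List.mem_append_right _ h)
  have := mgOutcome_append_cons_apply (I := I) (cu := cu) (s := l.take (l.idxOf j)) hjt
  rwa [← hsplit] at this

theorem catCount_mgOutcomeBefore_mono (hl : l.Nodup) (h : l.idxOf i ≤ l.idxOf j) :
    catCount (mgOutcomeBefore I cu l i) c ≤ catCount (mgOutcomeBefore I cu l j) c :=
  catCount_mgOutcome_le_of_prefix (List.take_prefix_take_left h) ((List.take_prefix _ _).nodup hl)

theorem catCount_mgOutcomeBefore_le (hl : l.Nodup) :
    catCount (mgOutcomeBefore I cu l j) c ≤ catCount (mgOutcome I cu l) c :=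
  catCount_mgOutcome_le_of_prefix (List.take_prefix _ _) hl

theorem quota_le_catCount_of_mgOutcome_eq_none (hl : l.Nodup) (hj : j ∈ l)
    (h : mgOutcome I cu l j = none) (he : I.Eligible j c) :
    I.quota c ≤ catCount (mgOutcomeBefore I cu l j) c := by
  rw [mgOutcome_apply_eq_mgStep hl hj] at h
  exact quota_le_catCount_of_mgStep_self_eq_none h he

theorem catCount_lt_quota_of_mgOutcome_eq_some (hl : l.Nodup) (hj : j ∈ l)
    (h : mgOutcome I cu l j = some c) : catCount (mgOutcomeBefore I cu l j) c < I.quota c := by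
  rw [mgOutcome_apply_eq_mgStep hl hj] at h
  exact catCount_lt_quota_of_mgStep_self_eq_some mgOutcomeBefore_self h

theorem quota_le_catCount_of_mgOutcome_eq_some_cu (hl : l.Nodup) (hj : j ∈ l)
    (h : mgOutcome I cu l j = some cu) (hc : c ≠ cu) (he : I.Eligible j c) :
    I.quota c ≤ catCount (mgOutcomeBefore I cu l j) c := by
  rw [mgOutcome_apply_eq_mgStep hl hj] at h
  exact quota_le_catCount_of_mgStep_self_eq_some_cu h hc he

end Before

section Properties

variable {l : List N}

theorem nonWasteful_mgOutcome (hb : IsBaseline l) : NonWasteful I (mgOutcome I cu l) :=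
  fun j c he hj => le_antisymm (isMatching_mgOutcome l c)
    ((quota_le_catCount_of_mgOutcome_eq_none hb.1 (hb.2 j) hj he).trans
      (catCount_mgOutcomeBefore_le hb.1))

theorem respectsPriorities_mgOutcome (hb : IsBaseline l) (hcuE : ∀ i, I.Eligible i cu)
    (hcons : Consistent I l) : RespectsPriorities I (mgOutcome I cu l) := by
  rintro ⟨i, j, c, hi, hj, hji⟩
  have hei : I.Eligible i c := complies_mgOutcome hcuE l i c hi
  have hej : I.Eligible j c := hei.of_strict hji
  have hlt : l.idxOf j < l.idxOf i := (hcons c j i hej hei).1 hji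
  have := (quota_le_catCount_of_mgOutcome_eq_none hb.1 (hb.2 j) hj hej).trans
    (catCount_mgOutcomeBefore_mono hb.1 hlt.le)
  exact (catCount_lt_quota_of_mgOutcome_eq_some hb.1 (hb.2 i) hi).not_ge this

theorem orderPreservingMG_mgOutcome (hb : IsBaseline l) (hcuE : ∀ i, I.Eligible i cu)
    (hcons : Consistent I l) : OrderPreservingMG I cu (mgOutcome I cu l) := by
  rintro i j ci cj hi hj hcj hij hei rfl
  have hej : I.Eligible j cj := complies_mgOutcome hcuE l j cj hj
  have hlt : l.idxOf i < l.idxOf j := (hcons cj i j hei hej).1 hij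
  have := (quota_le_catCount_of_mgOutcome_eq_some_cu hb.1 (hb.2 i) hi hcj hei).trans
    (catCount_mgOutcomeBefore_mono hb.1 hlt.le)
  exact (catCount_lt_quota_of_mgOutcome_eq_some hb.1 (hb.2 j) hj).not_ge this

theorem mgOutcome_eq_some_of_catCount_lt (hb : IsBaseline l) (hcuE : ∀ i, I.Eligible i cu)
    (hone : OneCategory I cu) {c : C} (hc : c ≠ cu) {k : N} (he : I.Eligible k c)
    (hlt : catCount (mgOutcome I cu l) c < I.quota c) : mgOutcome I cu l k = some c := by
  have not_full : ∀ {j}, I.quota c ≤ catCount (mgOutcomeBefore I cu l j) c → False :=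
    fun h => hlt.not_ge (h.trans (catCount_mgOutcomeBefore_le hb.1))
  rcases hk : mgOutcome I cu l k with _ | c'
  · exact (not_full (quota_le_catCount_of_mgOutcome_eq_none hb.1 (hb.2 k) hk he)).elim
  · rcases eq_or_ne c' cu with rfl | hc'
    · exact (not_full (quota_le_catCount_of_mgOutcome_eq_some_cu hb.1 (hb.2 k) hk hc he)).elim
    · rw [hone k c' c hc' hc (complies_mgOutcome hcuE l k c' hk) he]

end Properties

theorem maxBene_mgOutcome {l : List N} (hb : IsBaseline l) (hcuE : ∀ i, I.Eligible i cu)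
    (hone : OneCategory I cu) : MaxBene I cu (mgOutcome I cu l) := by
  refine fun ν hνM hνC => beneCount_le_of_catCount_le fun c hc => ?_
  refine (le_min (hνM c) (catCount_le_card_eligible hνC c)).trans ?_
  rcases le_or_gt (I.quota c) (catCount (mgOutcome I cu l) c) with hq | hlt
  · exact min_le_of_left_le hq
  · exact min_le_of_right_le (card_le_card (monotone_filter_right _ fun k _ hk =>
      mgOutcome_eq_some_of_catCount_lt hb hcuE hone hc hk hlt))

/-- If each agent is eligible for at most one preferential category and all
categories' priorities are consistent with the baseline ordering, then the outcome of the
minimum-guarantees rule (i) complies with the eligibility requirements, (ii) is a maximum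
beneficiary assignment, (iii) respects priorities, (iv) is non-wasteful, and (v) is order
preserving for `q_{c_u^1} = 0` and `q_{c_u^2} = q_{c_u}`. -/
theorem minimum_guarantees_properties (I : Inst N C) (cu : C) (order : List N)
    (hb : IsBaseline order) (hcuE : ∀ i : N, I.Eligible i cu)
    (hcons : Consistent I order) (hone : OneCategory I cu) :
    I.IsMatching (mgOutcome I cu order) ∧
      Complies I (mgOutcome I cu order) ∧
      MaxBene I cu (mgOutcome I cu order) ∧
      RespectsPriorities I (mgOutcome I cu order) ∧
      NonWasteful I (mgOutcome I cu order) ∧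
      OrderPreservingMG I cu (mgOutcome I cu order) :=
  ⟨isMatching_mgOutcome order, complies_mgOutcome hcuE order, maxBene_mgOutcome hb hcuE hone,
    respectsPriorities_mgOutcome hb hcuE hcons, nonWasteful_mgOutcome hb,
    orderPreservingMG_mgOutcome hb hcuE hcons⟩
end
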